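/- arXiv:2212.13162 — 11 statements merged into one kernel-verified Lean document; each statement's English description precedes it below -/
import Mathlib

section
/- Nonnegativity of the divergence: for every density matrix σ on the input space, every CPTP map F, and all Hermitian matrices A (on the input space) and B (on the output space), the divergence satisfies D_{σ,F}(A,B) ≥ 0. -/
open Matrix BigOperators ComplexOrder

noncomputable section

/-- A density matrix: positive semidefinite (hence Hermitian) with unit trace. -/
def IsDensity {d : Type*} [Fintype d] [DecidableEq d] (ρ : Matrix d d ℂ) : Prop :=
  ρ.PosSemidef ∧ ρ.trace = 1

/-- The Jordan-product map `E_ρ(A) = (ρA + Aρ)/2`. -/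
def jordan {d : Type*} [Fintype d] (ρ A : Matrix d d ℂ) : Matrix d d ℂ :=
  ((1 : ℂ)/2) • (ρ * A + A * ρ)

/-- The weighted squared norm `‖A‖²_ρ = Re tr(A² ρ)`. -/
def nsq {d : Type*} [Fintype d] (ρ A : Matrix d d ℂ) : ℝ :=
  (Matrix.trace (A * A * ρ)).re

/-- The channel `F(X) = Σ_i K_i X K_iᴴ` determined by a Kraus family. -/
def krausMap {n m ι : Type*} [Fintype n] [Fintype m] [Fintype ι]
    (K : ι → Matrix m n ℂ) (X : Matrix n n ℂ) : Matrix m m ℂ :=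
  ∑ i, K i * X * (K i)ᴴ

/-- The Hilbert–Schmidt adjoint `F*(Y) = Σ_i K_iᴴ Y K_i`. -/
def krausAdj {n m ι : Type*} [Fintype n] [Fintype m] [Fintype ι]
    (K : ι → Matrix m n ℂ) (Y : Matrix m m ℂ) : Matrix n n ℂ :=
  ∑ i, (K i)ᴴ * Y * K i

/-- Trace preservation: `Σ_i K_iᴴ K_i = 1`. -/
def TracePreserving {n m ι : Type*} [Fintype n] [DecidableEq n] [Fintype m] [Fintype ι]
    (K : ι → Matrix m n ℂ) : Prop :=
  ∑ i, (K i)ᴴ * K i = 1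

/-- The divergence `D_{σ,F}(A,B) = ‖A‖²_σ − 2 Re tr(F*(B)·E_σ(A)) + ‖B‖²_{F(σ)}`. -/
def Dvg {n m ι : Type*} [Fintype n] [Fintype m] [Fintype ι]
    (σ : Matrix n n ℂ) (K : ι → Matrix m n ℂ) (A : Matrix n n ℂ) (B : Matrix m m ℂ) : ℝ :=
  nsq σ A - 2 * (Matrix.trace (krausAdj K B * jordan σ A)).re + nsq (krausMap K σ) B

/-- `B` solves the Jordan GCE equation for `(σ, F, A)`: `E_{F(σ)}(B) = F(E_σ(A))`. -/
def SolvesGCE {n m ι : Type*} [Fintype n] [Fintype m] [Fintype ι]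
    (σ : Matrix n n ℂ) (K : ι → Matrix m n ℂ) (A : Matrix n n ℂ) (B : Matrix m m ℂ) : Prop :=
  jordan (krausMap K σ) B = krausMap K (jordan σ A)

/-- Real part of the trace of a PSD complex matrix is nonnegative. -/
lemma psd_trace_re_nonneg {d : Type*} [Fintype d] [DecidableEq d] {M : Matrix d d ℂ}
    (h : M.PosSemidef) : 0 ≤ M.trace.re := by
  have hd : ∀ j, 0 ≤ M j j := fun j => by
    exact h.diag_nonneg
  have : (0:ℂ) ≤ M.trace := Finset.sum_nonneg fun j _ => hd j
  exact (Complex.le_def.mp this).1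

/-- Nonnegativity of the divergence. -/
theorem divergence_nonneg {n m ι : Type*} [Fintype n] [DecidableEq n]
    [Fintype m] [DecidableEq m] [Fintype ι]
    (σ : Matrix n n ℂ) (hσ : IsDensity σ)
    (K : ι → Matrix m n ℂ) (hK : TracePreserving K)
    (A : Matrix n n ℂ) (hA : A.IsHermitian)
    (B : Matrix m m ℂ) (hB : B.IsHermitian) :
    0 ≤ Dvg σ K A B := by
  obtain ⟨hpsd, -⟩ := hσ
  set C : ι → Matrix m n ℂ := fun i => K i * A - B * K i with hC
  have hexp : ∀ i, Matrix.trace (C i * σ * (C i)ᴴ)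
      = Matrix.trace ((K i)ᴴ * K i * (A * σ * A))
        - Matrix.trace ((K i)ᴴ * B * K i * (A * σ))
        - Matrix.trace ((K i)ᴴ * B * K i * (σ * A))
        + Matrix.trace (B * B * (K i * σ * (K i)ᴴ)) := by
    intro i
    have h1 : (C i)ᴴ = A * (K i)ᴴ - (K i)ᴴ * B := by
      simp [hC, conjTranspose_sub, conjTranspose_mul, hA.eq, hB.eq]
    rw [h1]
    simp only [hC, Matrix.sub_mul, Matrix.mul_sub, trace_sub]
    have e1 : Matrix.trace (K i * A * σ * (A * (K i)ᴴ))
        = Matrix.trace ((K i)ᴴ * K i * (A * σ * A)) := by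
      rw [show K i * A * σ * (A * (K i)ᴴ) = (K i * A * σ * A) * (K i)ᴴ by
        simp only [Matrix.mul_assoc], trace_mul_comm]
      simp only [Matrix.mul_assoc]
    have e2 : Matrix.trace (K i * A * σ * ((K i)ᴴ * B))
        = Matrix.trace ((K i)ᴴ * B * K i * (A * σ)) := by
      rw [show K i * A * σ * ((K i)ᴴ * B) = (K i * (A * σ)) * ((K i)ᴴ * B) by
        simp only [Matrix.mul_assoc], trace_mul_comm]
      simp only [Matrix.mul_assoc]
    have e3 : Matrix.trace (B * K i * σ * (A * (K i)ᴴ))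
        = Matrix.trace ((K i)ᴴ * B * K i * (σ * A)) := by
      rw [show B * K i * σ * (A * (K i)ᴴ) = (B * K i * (σ * A)) * (K i)ᴴ by
        simp only [Matrix.mul_assoc], trace_mul_comm]
      simp only [Matrix.mul_assoc]
    have e4 : Matrix.trace (B * K i * σ * ((K i)ᴴ * B))
        = Matrix.trace (B * B * (K i * σ * (K i)ᴴ)) := by
      rw [show B * K i * σ * ((K i)ᴴ * B) = B * (K i * σ * (K i)ᴴ) * B by
        simp only [Matrix.mul_assoc], trace_mul_comm]
      simp only [Matrix.mul_assoc]
    rw [e1, e2, e3, e4]; ring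
  have key : (∑ i, Matrix.trace (C i * σ * (C i)ᴴ))
      = Matrix.trace (A * A * σ) - 2 * Matrix.trace (krausAdj K B * jordan σ A)
        + Matrix.trace (B * B * krausMap K σ) := by
    have t1 : (∑ i, Matrix.trace ((K i)ᴴ * K i * (A * σ * A)))
        = Matrix.trace (A * A * σ) := by
      rw [← trace_sum, ← Finset.sum_mul, hK, Matrix.one_mul, Matrix.trace_mul_cycle]
    have t4 : (∑ i, Matrix.trace (B * B * (K i * σ * (K i)ᴴ)))
        = Matrix.trace (B * B * krausMap K σ) := by
      rw [← trace_sum, ← Finset.mul_sum]; rfl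
    have t23 : 2 * Matrix.trace (krausAdj K B * jordan σ A)
        = (∑ i, Matrix.trace ((K i)ᴴ * B * K i * (A * σ)))
          + (∑ i, Matrix.trace ((K i)ᴴ * B * K i * (σ * A))) := by
      rw [krausAdj, jordan, Matrix.mul_smul, Matrix.mul_add, trace_smul, trace_add,
        smul_eq_mul, ← trace_sum, ← trace_sum, ← Finset.sum_mul, ← Finset.sum_mul]
      ring
    rw [Finset.sum_congr rfl fun i _ => hexp i]
    simp only [Finset.sum_add_distrib, Finset.sum_sub_distrib, t1, t4, t23]
    ring
  have hre : Dvg σ K A B = (∑ i, Matrix.trace (C i * σ * (C i)ᴴ)).re := by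
    rw [key]
    simp [Dvg, nsq, Complex.sub_re, Complex.add_re, Complex.mul_re]
  rw [hre, Complex.re_sum]
  exact Finset.sum_nonneg fun i _ =>
    psd_trace_re_nonneg (hpsd.mul_mul_conjTranspose_same (C i))
end
end

section
/- Chain rule for generalized conditional expectations (Theorem 1): let σ be a density matrix on the input space, F : n×n → m×m and G : m×m → p×p be CPTP maps, and A Hermitian on the input space. If a Hermitian matrix B solves the Jordan GCE equation for (σ, F, A), and a Hermitian matrix C solves the Jordan GCE equation for (F(σ), G, B), then C solves the Jordan GCE equation for (σ, G∘F, A) (where G∘F is again CPTP). -/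
open Matrix BigOperators ComplexOrder

noncomputable section

/-- Chain rule for GCEs. -/
theorem gce_chain_rule {n m p ι κ : Type*} [Fintype n] [DecidableEq n]
    [Fintype m] [DecidableEq m] [Fintype p] [DecidableEq p] [Fintype ι] [Fintype κ]
    (σ : Matrix n n ℂ) (hσ : IsDensity σ)
    (K : ι → Matrix m n ℂ) (hK : TracePreserving K)
    (L : κ → Matrix p m ℂ) (hL : TracePreserving L)
    (A : Matrix n n ℂ) (hA : A.IsHermitian)
    (B : Matrix m m ℂ) (hB : B.IsHermitian)
    (C : Matrix p p ℂ) (hC : C.IsHermitian)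
    (hB_gce : SolvesGCE σ K A B)
    (hC_gce : SolvesGCE (krausMap K σ) L B C) :
    jordan (krausMap L (krausMap K σ)) C = krausMap L (krausMap K (jordan σ A)) := by
  rw [hC_gce, hB_gce]
end
end

section
/- Pythagorean theorem for divergences (Theorem 2): let σ be a density matrix, F and G composable CPTP maps, and A Hermitian on the input space. If a Hermitian matrix B solves the Jordan GCE equation for (σ, F, A) and a Hermitian matrix C solves the Jordan GCE equation for (F(σ), G, B), then D_{σ,G∘F}(A,C) = D_{σ,F}(A,B) + D_{F(σ),G}(B,C). -/
open Matrix BigOperators ComplexOrder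

noncomputable section

/-- The divergence for the composite channel `G ∘ F`, whose Hilbert–Schmidt
adjoint is `F* ∘ G*`. -/
def DvgComp {n m p ι κ : Type*} [Fintype n] [Fintype m] [Fintype p] [Fintype ι] [Fintype κ]
    (σ : Matrix n n ℂ) (K : ι → Matrix m n ℂ) (L : κ → Matrix p m ℂ)
    (A : Matrix n n ℂ) (C : Matrix p p ℂ) : ℝ :=
  nsq σ A - 2 * (Matrix.trace (krausAdj K (krausAdj L C) * jordan σ A)).re
    + nsq (krausMap L (krausMap K σ)) C

lemma trace_krausAdj_mul {n m ι : Type*} [Fintype n] [Fintype m] [Fintype ι]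
    (K : ι → Matrix m n ℂ) (Y : Matrix m m ℂ) (X : Matrix n n ℂ) :
    Matrix.trace (krausAdj K Y * X) = Matrix.trace (Y * krausMap K X) := by
  simp only [krausAdj, krausMap, Finset.sum_mul, Finset.mul_sum, Matrix.trace_sum]
  refine Finset.sum_congr rfl fun i _ => ?_
  rw [Matrix.mul_assoc ((K i)ᴴ), Matrix.mul_assoc ((K i)ᴴ), Matrix.trace_mul_comm,
    Matrix.mul_assoc, Matrix.mul_assoc, Matrix.mul_assoc (K i) X ((K i)ᴴ)]

lemma trace_mul_jordan {d : Type*} [Fintype d] (ρ X : Matrix d d ℂ) :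
    Matrix.trace (X * jordan ρ X) = Matrix.trace (X * X * ρ) := by
  simp only [jordan, Matrix.mul_smul, Matrix.trace_smul, Matrix.mul_add, Matrix.trace_add]
  rw [← Matrix.mul_assoc, ← Matrix.mul_assoc, Matrix.trace_mul_cycle X ρ X, smul_eq_mul]
  ring

/-- Pythagorean theorem for divergences. -/
theorem divergence_pythagorean {n m p ι κ : Type*} [Fintype n] [DecidableEq n]
    [Fintype m] [DecidableEq m] [Fintype p] [DecidableEq p] [Fintype ι] [Fintype κ]
    (σ : Matrix n n ℂ) (hσ : IsDensity σ)
    (K : ι → Matrix m n ℂ) (hK : TracePreserving K)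
    (L : κ → Matrix p m ℂ) (hL : TracePreserving L)
    (A : Matrix n n ℂ) (hA : A.IsHermitian)
    (B : Matrix m m ℂ) (hB : B.IsHermitian)
    (C : Matrix p p ℂ) (hC : C.IsHermitian)
    (hB_gce : SolvesGCE σ K A B)
    (hC_gce : SolvesGCE (krausMap K σ) L B C) :
    DvgComp σ K L A C = Dvg σ K A B + Dvg (krausMap K σ) L B C := by
  have h1 : Matrix.trace (krausAdj K B * jordan σ A) = Matrix.trace (B * B * krausMap K σ) := by
    rw [trace_krausAdj_mul, ← hB_gce, trace_mul_jordan]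
  have h2 : Matrix.trace (krausAdj L C * jordan (krausMap K σ) B)
      = Matrix.trace (C * C * krausMap L (krausMap K σ)) := by
    rw [trace_krausAdj_mul, ← hC_gce, trace_mul_jordan]
  have h3 : Matrix.trace (krausAdj K (krausAdj L C) * jordan σ A)
      = Matrix.trace (C * C * krausMap L (krausMap K σ)) := by
    rw [trace_krausAdj_mul, ← hB_gce, h2]
  simp only [DvgComp, Dvg, nsq, h1, h2, h3]
  ring
end
end

section
/- Law of total expectation (Lemma 1): let σ be a density matrix, F a CPTP map, and A Hermitian on the input space. If a Hermitian matrix B solves the Jordan GCE equation for (σ, F, A), then tr(σ·A) = tr(F(σ)·B). -/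
open Matrix BigOperators ComplexOrder

noncomputable section

lemma trace_jordan {d : Type*} [Fintype d] (ρ A : Matrix d d ℂ) :
    Matrix.trace (jordan ρ A) = Matrix.trace (ρ * A) := by
  simp [jordan, Matrix.trace_add, Matrix.trace_mul_comm A ρ]
  ring

lemma trace_krausMap {n m ι : Type*} [Fintype n] [DecidableEq n] [Fintype m] [Fintype ι]
    (K : ι → Matrix m n ℂ) (hK : TracePreserving K) (X : Matrix n n ℂ) :
    Matrix.trace (krausMap K X) = Matrix.trace X := by
  unfold krausMap
  rw [Matrix.trace_sum]
  calc ∑ i, Matrix.trace (K i * X * (K i)ᴴ)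
      = ∑ i, Matrix.trace ((K i)ᴴ * K i * X) := by
        refine Finset.sum_congr rfl fun i _ => ?_
        rw [Matrix.trace_mul_comm, Matrix.mul_assoc]
    _ = Matrix.trace X := by
        rw [← Matrix.trace_sum]
        simp_rw [← Finset.sum_mul]
        rw [hK, Matrix.one_mul]

/-- Law of total expectation. -/
theorem law_of_total_expectation {n m ι : Type*} [Fintype n] [DecidableEq n]
    [Fintype m] [DecidableEq m] [Fintype ι]
    (σ : Matrix n n ℂ) (hσ : IsDensity σ)
    (K : ι → Matrix m n ℂ) (hK : TracePreserving K)
    (A : Matrix n n ℂ) (hA : A.IsHermitian)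
    (B : Matrix m m ℂ) (hB : B.IsHermitian)
    (hGCE : SolvesGCE σ K A B) :
    Matrix.trace (σ * A) = Matrix.trace (krausMap K σ * B) := by
  have h1 : Matrix.trace (krausMap K σ * B) = Matrix.trace (jordan (krausMap K σ) B) :=
    (trace_jordan _ _).symm
  rw [h1, hGCE, trace_krausMap K hK, trace_jordan, Matrix.trace_mul_comm]
end
end

section
/- Monotonicity of the Bayesian error under decoherence (Corollary 1): let σ be a density matrix, F and G composable CPTP maps, and A Hermitian on the input space. If a Hermitian matrix B solves the Jordan GCE equation for (σ, F, A), and a Hermitian matrix C solves the Jordan GCE equation for (F(σ), G, B), then D_{σ,G∘F}(A,C) ≥ D_{σ,F}(A,B). -/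
open Matrix BigOperators ComplexOrder

noncomputable section

section MyAux
variable {n m ι : Type*} [Fintype n] [DecidableEq n] [Fintype m] [DecidableEq m] [Fintype ι]

lemma my_trace_adj (K : ι → Matrix m n ℂ) (Y : Matrix m m ℂ) (X : Matrix n n ℂ) :
    Matrix.trace (krausAdj K Y * X) = Matrix.trace (Y * krausMap K X) := by
  simp only [krausAdj, krausMap, Finset.sum_mul, Finset.mul_sum, trace_sum]
  refine Finset.sum_congr rfl fun i _ => ?_
  rw [show (K i)ᴴ * Y * K i * X = (K i)ᴴ * (Y * (K i * X)) by simp [Matrix.mul_assoc],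
      show Y * (K i * X * (K i)ᴴ) = (Y * (K i * X)) * (K i)ᴴ by simp [Matrix.mul_assoc],
      trace_mul_comm]

lemma my_trace_jordan_self (τ X : Matrix n n ℂ) :
    Matrix.trace (X * jordan τ X) = Matrix.trace (X * X * τ) := by
  simp only [jordan, Matrix.mul_smul, Matrix.mul_add, trace_smul, trace_add]
  rw [show X * (τ * X) = (X * τ) * X from (Matrix.mul_assoc X τ X).symm,
      trace_mul_comm (X * τ) X,
      show X * (X * τ) = X * X * τ from (Matrix.mul_assoc X X τ).symm]
  simp [smul_eq_mul]
  ring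

lemma my_trace_re_nonneg {M : Matrix n n ℂ} (hM : M.PosSemidef) : 0 ≤ M.trace.re := by
  classical
  rw [Matrix.trace, Complex.re_sum]
  refine Finset.sum_nonneg fun i _ => ?_
  have := hM.re_dotProduct_nonneg (Pi.single i 1)
  simpa [dotProduct, mulVec, Pi.single_apply, Finset.mul_sum] using this

lemma my_krausMap_posSemidef (K : ι → Matrix m n ℂ) {σ : Matrix n n ℂ} (hσ : σ.PosSemidef) :
    (krausMap K σ).PosSemidef := by
  classical
  exact Finset.sum_induction _ _ (fun a b ha hb => ha.add hb) Matrix.PosSemidef.zero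
    (fun i _ => hσ.mul_mul_conjTranspose_same (K i))

lemma my_nsq_nonneg {τ X : Matrix n n ℂ} (hτ : τ.PosSemidef) (hX : X.IsHermitian) :
    0 ≤ nsq τ X := by
  have h : Matrix.trace (X * X * τ) = Matrix.trace (X * τ * Xᴴ) := by
    rw [hX.eq, Matrix.mul_assoc X X τ, trace_mul_comm]
  unfold nsq
  rw [h]
  exact my_trace_re_nonneg (hτ.mul_mul_conjTranspose_same X)

lemma my_krausAdj_herm (K : ι → Matrix m n ℂ) {C : Matrix m m ℂ} (hC : C.IsHermitian) :
    (krausAdj K C).IsHermitian := by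
  unfold Matrix.IsHermitian krausAdj
  rw [conjTranspose_sum]
  refine Finset.sum_congr rfl fun i _ => ?_
  simp [Matrix.mul_assoc, hC.eq]

lemma my_jordan_cross (τ X Y : Matrix n n ℂ) :
    Matrix.trace (X * jordan τ Y) =
      ((1:ℂ)/2) * (Matrix.trace (X * Y * τ) + Matrix.trace (Y * X * τ)) := by
  simp only [jordan, Matrix.mul_smul, Matrix.mul_add, trace_smul, trace_add]
  rw [show X * (τ * Y) = (X * τ) * Y from (Matrix.mul_assoc X τ Y).symm,
      trace_mul_comm (X * τ) Y,
      show Y * (X * τ) = Y * X * τ from (Matrix.mul_assoc Y X τ).symm,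
      show X * (Y * τ) = X * Y * τ from (Matrix.mul_assoc X Y τ).symm]
  simp [smul_eq_mul]
  ring

/-- Cauchy–Schwarz for the weighted inner product. -/
lemma my_cs {τ X Y : Matrix n n ℂ} (hτ : τ.PosSemidef)
    (hX : X.IsHermitian) (hY : Y.IsHermitian) :
    ((Matrix.trace (X * jordan τ Y)).re) ^ 2 ≤ nsq τ X * nsq τ Y := by
  have hbre : 2 * (Matrix.trace (X * jordan τ Y)).re
      = (Matrix.trace (X * Y * τ)).re + (Matrix.trace (Y * X * τ)).re := by
    rw [my_jordan_cross]
    simp [Complex.mul_re, Complex.add_re, Complex.add_im]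
  have key : ∀ t : ℝ, 0 ≤ nsq τ Y * (t * t)
      + (2 * (Matrix.trace (X * jordan τ Y)).re) * t + nsq τ X := by
    intro t
    have hXY : (X + (t:ℂ) • Y).IsHermitian := by
      unfold Matrix.IsHermitian
      rw [conjTranspose_add, conjTranspose_smul, hX.eq, hY.eq]
      simp [Complex.conj_ofReal]
    have h0 := my_nsq_nonneg hτ hXY
    have hm : (X + (t:ℂ) • Y) * (X + (t:ℂ) • Y) * τ
        = X * X * τ + (t:ℂ) • (X * Y * τ + Y * X * τ) + ((t:ℂ) * t) • (Y * Y * τ) := by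
      simp only [Matrix.add_mul, Matrix.mul_add, Matrix.smul_mul, Matrix.mul_smul,
        smul_smul, smul_add]
      abel
    have hexp : nsq τ (X + (t:ℂ) • Y)
        = nsq τ Y * (t * t) + (2 * (Matrix.trace (X * jordan τ Y)).re) * t + nsq τ X := by
      unfold nsq
      rw [hm, hbre]
      simp only [trace_add, trace_smul, Complex.add_re, smul_eq_mul, Complex.mul_re,
        Complex.ofReal_re, Complex.ofReal_im, Complex.mul_im, Complex.add_im]
      ring
    linarith [hexp ▸ h0]
  have hd := discrim_le_zero key
  rw [discrim] at hd
  nlinarith [hd]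

/-- Kadison–Schwarz for the unital adjoint channel, traced against a PSD matrix. -/
lemma my_ks {τ : Matrix m m ℂ} (hτ : τ.PosSemidef)
    (L : ι → Matrix n m ℂ) (hL : ∑ i, (L i)ᴴ * L i = 1)
    {C : Matrix n n ℂ} (hC : C.IsHermitian) :
    nsq τ (krausAdj L C) ≤ (Matrix.trace (krausAdj L (C * C) * τ)).re := by
  set D := krausAdj L C with hD
  have hDh : D.IsHermitian := my_krausAdj_herm L hC
  have hsum : ∑ i, (C * L i - L i * D)ᴴ * (C * L i - L i * D)
      = krausAdj L (C * C) - D * D - D * D + D * (∑ i, (L i)ᴴ * L i) * D := by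
    calc ∑ i, (C * L i - L i * D)ᴴ * (C * L i - L i * D)
        = ∑ i, ((L i)ᴴ * (C * C) * L i - ((L i)ᴴ * C * L i) * D - D * ((L i)ᴴ * C * L i)
            + D * ((L i)ᴴ * L i) * D) :=
          Finset.sum_congr rfl (fun i _ => by
            simp only [conjTranspose_sub, conjTranspose_mul, hC.eq, hDh.eq,
              Matrix.sub_mul, Matrix.mul_sub, Matrix.mul_assoc]
            abel)
      _ = (∑ i, (L i)ᴴ * (C * C) * L i) - (∑ i, (L i)ᴴ * C * L i) * D
            - D * (∑ i, (L i)ᴴ * C * L i) + D * (∑ i, (L i)ᴴ * L i) * D := by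
          simp only [Finset.sum_add_distrib, Finset.sum_sub_distrib, Finset.sum_mul,
            Finset.mul_sum, Matrix.mul_assoc]
      _ = krausAdj L (C * C) - D * D - D * D + D * (∑ i, (L i)ᴴ * L i) * D := by
          simp only [krausAdj, hD]
  rw [hL, Matrix.mul_one] at hsum
  have key : krausAdj L (C * C) - D * D
      = ∑ i, (C * L i - L i * D)ᴴ * (C * L i - L i * D) := by
    rw [hsum]; abel
  have hpos : 0 ≤ (Matrix.trace ((krausAdj L (C * C) - D * D) * τ)).re := by
    rw [key, Finset.sum_mul, trace_sum, Complex.re_sum]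
    refine Finset.sum_nonneg fun i _ => ?_
    set M := C * L i - L i * D with hM
    have h : Matrix.trace (Mᴴ * M * τ) = Matrix.trace (M * τ * Mᴴ) := by
      rw [Matrix.mul_assoc Mᴴ M τ, trace_mul_comm, Matrix.mul_assoc]
    rw [h]
    exact my_trace_re_nonneg (hτ.mul_mul_conjTranspose_same M)
  have hsub : Matrix.trace ((krausAdj L (C * C) - D * D) * τ)
      = Matrix.trace (krausAdj L (C * C) * τ) - Matrix.trace (D * D * τ) := by
    rw [Matrix.sub_mul, trace_sub]
  rw [hsub, Complex.sub_re] at hpos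
  unfold nsq
  linarith

end MyAux

/-- Monotonicity of the Bayesian error under decoherence. -/
theorem bayesian_error_monotone {n m p ι κ : Type*} [Fintype n] [DecidableEq n]
    [Fintype m] [DecidableEq m] [Fintype p] [DecidableEq p] [Fintype ι] [Fintype κ]
    (σ : Matrix n n ℂ) (hσ : IsDensity σ)
    (K : ι → Matrix m n ℂ) (hK : TracePreserving K)
    (L : κ → Matrix p m ℂ) (hL : TracePreserving L)
    (A : Matrix n n ℂ) (hA : A.IsHermitian)
    (B : Matrix m m ℂ) (hB : B.IsHermitian)
    (C : Matrix p p ℂ) (hC : C.IsHermitian)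
    (hB_gce : SolvesGCE σ K A B)
    (hC_gce : SolvesGCE (krausMap K σ) L B C) :
    Dvg σ K A B ≤ DvgComp σ K L A C := by
  classical
  obtain ⟨hσp, -⟩ := hσ
  have hτ : (krausMap K σ).PosSemidef := my_krausMap_posSemidef K hσp
  have hτ' : (krausMap L (krausMap K σ)).PosSemidef := my_krausMap_posSemidef L hτ
  have hDh : (krausAdj L C).IsHermitian := my_krausAdj_herm L hC
  have h1 : Matrix.trace (krausAdj K B * jordan σ A)
      = Matrix.trace (B * B * krausMap K σ) := by
    rw [my_trace_adj, ← hB_gce, my_trace_jordan_self]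
  have h2b : Matrix.trace (krausAdj L C * jordan (krausMap K σ) B)
      = Matrix.trace (C * C * krausMap L (krausMap K σ)) := by
    rw [my_trace_adj, ← hC_gce, my_trace_jordan_self]
  have h2 : Matrix.trace (krausAdj K (krausAdj L C) * jordan σ A)
      = Matrix.trace (C * C * krausMap L (krausMap K σ)) := by
    rw [my_trace_adj, ← hB_gce, h2b]
  have hb2 : 0 ≤ nsq (krausMap K σ) B := my_nsq_nonneg hτ hB
  have hc2 : 0 ≤ (Matrix.trace (C * C * krausMap L (krausMap K σ))).re :=
    my_nsq_nonneg hτ' hC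
  have hDnn : 0 ≤ nsq (krausMap K σ) (krausAdj L C) := my_nsq_nonneg hτ hDh
  have hcs : ((Matrix.trace (C * C * krausMap L (krausMap K σ))).re) ^ 2
      ≤ nsq (krausMap K σ) (krausAdj L C) * nsq (krausMap K σ) B := by
    have h := my_cs hτ hDh hB
    rwa [h2b] at h
  have hks : nsq (krausMap K σ) (krausAdj L C)
      ≤ (Matrix.trace (C * C * krausMap L (krausMap K σ))).re := by
    have h := my_ks hτ L hL hC
    rwa [my_trace_adj] at h
  have hmain : (Matrix.trace (C * C * krausMap L (krausMap K σ))).re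
      ≤ nsq (krausMap K σ) B := by
    nlinarith [hcs, hks, hb2, hc2, hDnn]
  have hnb : nsq (krausMap K σ) B = (Matrix.trace (B * B * krausMap K σ)).re := rfl
  have hnc : nsq (krausMap L (krausMap K σ)) C
      = (Matrix.trace (C * C * krausMap L (krausMap K σ))).re := rfl
  unfold Dvg DvgComp
  rw [h1, h2, hnb, hnc]
  rw [hnb] at hmain
  linarith
end
end

section
/- No POVM can improve upon the Personick estimator (Corollary 2, finite-outcome form): in the Bayesian setup, if B* is a Personick estimator, then for every finite outcome set Y, every POVM (M_y)_{y∈Y} on the sensor space, and every estimator b : Y → ℝ: Σ_x Σ_y P(x)·(b(y) − a(x))²·Re tr(M_y·ρ_x) ≥ Σ_x P(x)·a(x)² − Re tr((B*)²·ρ̄), where the right-hand side is the Bayesian error achieved by a von Neumann measurement of B*. -/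
open Matrix BigOperators ComplexOrder

set_option maxHeartbeats 1000000

noncomputable section

lemma trace_re_nonneg' {d : Type*} [Fintype d] [DecidableEq d]
    {A : Matrix d d ℂ} (hA : A.PosSemidef) : 0 ≤ (Matrix.trace A).re := by
  rw [Matrix.trace, Complex.re_sum]
  apply Finset.sum_nonneg
  intro i _
  have := hA.re_dotProduct_nonneg (Pi.single i 1)
  simpa [Matrix.diag, dotProduct, Pi.single_apply, Matrix.mulVec, Finset.mul_sum] using this

lemma trace_mul_psd_re_nonneg' {d : Type*} [Fintype d] [DecidableEq d]
    {A B : Matrix d d ℂ} (hA : A.PosSemidef) (hB : B.PosSemidef) :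
    0 ≤ (Matrix.trace (A * B)).re := by
  open scoped MatrixOrder in
  obtain ⟨S, hS⟩ := CStarAlgebra.nonneg_iff_eq_star_mul_self.mp hA.nonneg
  have h : A * B = Sᴴ * (S * B) := by
    rw [hS, Matrix.star_eq_conjTranspose, mul_assoc]
  rw [h, Matrix.trace_mul_comm]
  exact trace_re_nonneg' (hB.mul_mul_conjTranspose_same _)

/-- No POVM can improve upon the Personick estimator. -/
theorem povm_no_improvement {X d Y : Type*} [Fintype X] [Fintype d] [DecidableEq d]
    [Fintype Y]
    (P : X → ℝ) (hP : ∀ x, 0 ≤ P x) (hPsum : ∑ x, P x = 1)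
    (a : X → ℝ) (ρ : X → Matrix d d ℂ) (hρ : ∀ x, IsDensity (ρ x))
    (Bstar : Matrix d d ℂ) (hBstar : Bstar.IsHermitian)
    (hPersonick : (∑ x, (P x : ℂ) • ρ x) * Bstar + Bstar * (∑ x, (P x : ℂ) • ρ x)
      = (2 : ℂ) • ∑ x, ((P x * a x : ℝ) : ℂ) • ρ x)
    (M : Y → Matrix d d ℂ) (hMpos : ∀ y, (M y).PosSemidef) (hMsum : ∑ y, M y = 1)
    (b : Y → ℝ) :
    ∑ x, ∑ y, P x * (b y - a x) ^ 2 * (Matrix.trace (M y * ρ x)).re ≥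
      ∑ x, P x * (a x) ^ 2
        - (Matrix.trace (Bstar * Bstar * (∑ x, (P x : ℂ) • ρ x))).re := by
  have hρ' : ∀ x, (ρ x).PosSemidef ∧ (ρ x).trace = 1 := hρ
  set R : Matrix d d ℂ := ∑ x, (P x : ℂ) • ρ x with hRdef
  set Q : Matrix d d ℂ := ∑ x, ((P x * a x : ℝ) : ℂ) • ρ x with hQdef
  set C : Y → Matrix d d ℂ := fun y => ((b y : ℂ)) • 1 - Bstar with hCdef
  -- R is positive semidefinite
  have hRpos : R.PosSemidef := by
    rw [hRdef]
    apply Finset.sum_induction _ Matrix.PosSemidef (fun A B hA hB => hA.add hB)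
      Matrix.PosSemidef.zero
    intro x _
    constructor
    · rw [Matrix.IsHermitian, Matrix.conjTranspose_smul, (hρ' x).1.isHermitian.eq]
      simp
    · exact ((hρ' x).1.smul (a := (P x : ℂ))
        (by exact_mod_cast Complex.zero_le_real.mpr (hP x))).2
  -- helper trace identities
  have h1 : ∀ y, Matrix.trace (M y * R) = ∑ x, (P x : ℂ) * Matrix.trace (M y * ρ x) := by
    intro y
    simp [hRdef, Matrix.mul_sum, Matrix.mul_smul, Matrix.trace_sum, Matrix.trace_smul,
      smul_eq_mul]
  have h2 : ∀ y, Matrix.trace (M y * Q)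
      = ∑ x, ((P x * a x : ℝ) : ℂ) * Matrix.trace (M y * ρ x) := by
    intro y
    simp [hQdef, Matrix.mul_sum, Matrix.mul_smul, Matrix.trace_sum, Matrix.trace_smul,
      smul_eq_mul]
  have h3 : ∀ x, ∑ y, Matrix.trace (M y * ρ x) = 1 := by
    intro x
    rw [← Matrix.trace_sum, ← Matrix.sum_mul, hMsum, one_mul, (hρ' x).2]
  have h4 : ∀ y, Matrix.trace (C y * M y * C y * R)
      = (b y : ℂ) ^ 2 * Matrix.trace (M y * R) - 2 * (b y : ℂ) * Matrix.trace (M y * Q)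
        + Matrix.trace (Bstar * (M y * (Bstar * R))) := by
    intro y
    have expand : C y * M y * C y * R
        = ((b y : ℂ) ^ 2) • (M y * R) - (b y : ℂ) • (Bstar * (M y * R))
          - (b y : ℂ) • (M y * (Bstar * R)) + Bstar * (M y * (Bstar * R)) := by
      rw [hCdef]
      simp only [Matrix.sub_mul, Matrix.mul_sub, Matrix.smul_mul, Matrix.mul_smul,
        Matrix.one_mul, Matrix.mul_one, mul_assoc]
      module
    rw [expand]
    simp only [Matrix.trace_add, Matrix.trace_sub, Matrix.trace_smul, smul_eq_mul]
    have hc1 : Matrix.trace (Bstar * (M y * R)) = Matrix.trace (M y * (R * Bstar)) := by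
      rw [Matrix.trace_mul_comm, mul_assoc]
    have hc2 : (b y : ℂ) * Matrix.trace (M y * (R * Bstar))
        + (b y : ℂ) * Matrix.trace (M y * (Bstar * R))
        = 2 * (b y : ℂ) * Matrix.trace (M y * Q) := by
      rw [← mul_add, ← Matrix.trace_add, ← Matrix.mul_add, hPersonick]
      rw [Matrix.mul_smul, Matrix.trace_smul]
      simp [smul_eq_mul]
      ring
    rw [hc1]
    linear_combination -hc2
  have h5 : ∑ y, Matrix.trace (Bstar * (M y * (Bstar * R)))
      = Matrix.trace (Bstar * Bstar * R) := by
    rw [← Matrix.trace_sum, ← Matrix.mul_sum]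
    congr 1
    rw [← Matrix.sum_mul, hMsum, one_mul, mul_assoc]
  -- each C y is Hermitian
  have hCHerm : ∀ y, (C y)ᴴ = C y := by
    intro y
    rw [hCdef]
    simp only [Matrix.conjTranspose_sub, Matrix.conjTranspose_smul, Matrix.conjTranspose_one,
      hBstar.eq, Complex.star_def, Complex.conj_ofReal]
  -- nonnegativity of each correction term
  have hpos : ∀ y, 0 ≤ (Matrix.trace (C y * M y * C y * R)).re := by
    intro y
    have : (C y * M y * C y).PosSemidef := by
      have := (hMpos y).conjTranspose_mul_mul_same (C y)
      rwa [hCHerm y] at this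
    exact trace_mul_psd_re_nonneg' this hRpos
  -- complex master identity
  have master : ∑ x, ∑ y, ((P x * (b y - a x) ^ 2 : ℝ) : ℂ) * Matrix.trace (M y * ρ x)
      = ∑ y, Matrix.trace (C y * M y * C y * R)
        + (∑ x, ((P x * a x ^ 2 : ℝ) : ℂ)) - Matrix.trace (Bstar * Bstar * R) := by
    have lhs_eq : ∑ x, ∑ y, ((P x * (b y - a x) ^ 2 : ℝ) : ℂ) * Matrix.trace (M y * ρ x)
        = ∑ y, ((b y : ℂ) ^ 2 * Matrix.trace (M y * R)
            - 2 * (b y : ℂ) * Matrix.trace (M y * Q))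
          + ∑ x, ((P x * a x ^ 2 : ℝ) : ℂ) := by
      rw [Finset.sum_comm]
      have hy : ∀ y, ∑ x, ((P x * (b y - a x) ^ 2 : ℝ) : ℂ) * Matrix.trace (M y * ρ x)
          = ((b y : ℂ) ^ 2 * Matrix.trace (M y * R)
              - 2 * (b y : ℂ) * Matrix.trace (M y * Q))
            + ∑ x, ((P x * a x ^ 2 : ℝ) : ℂ) * Matrix.trace (M y * ρ x) := by
        intro y
        rw [h1 y, h2 y, Finset.mul_sum, Finset.mul_sum,
          ← Finset.sum_sub_distrib, ← Finset.sum_add_distrib]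
        refine Finset.sum_congr rfl fun x _ => ?_
        push_cast
        ring
      rw [Finset.sum_congr rfl fun y _ => hy y, Finset.sum_add_distrib]
      congr 1
      rw [Finset.sum_comm]
      refine Finset.sum_congr rfl fun x _ => ?_
      rw [← Finset.mul_sum, h3 x, mul_one]
    rw [lhs_eq]
    rw [Finset.sum_congr rfl (fun y _ => h4 y)]
    rw [Finset.sum_add_distrib, Finset.sum_sub_distrib, h5]
    ring
  -- pass to real parts
  have main_eq : ∑ x, ∑ y, P x * (b y - a x) ^ 2 * (Matrix.trace (M y * ρ x)).re
      = ∑ y, (Matrix.trace (C y * M y * C y * R)).re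
        + ∑ x, P x * a x ^ 2 - (Matrix.trace (Bstar * Bstar * R)).re := by
    have : ∑ x, ∑ y, P x * (b y - a x) ^ 2 * (Matrix.trace (M y * ρ x)).re
        = (∑ x, ∑ y, ((P x * (b y - a x) ^ 2 : ℝ) : ℂ) * Matrix.trace (M y * ρ x)).re := by
      rw [Complex.re_sum]
      refine Finset.sum_congr rfl fun x _ => ?_
      rw [Complex.re_sum]
      refine Finset.sum_congr rfl fun y _ => ?_
      rw [Complex.re_ofReal_mul]
    rw [this, master]
    simp only [Complex.sub_re, Complex.add_re, Complex.re_sum, Complex.ofReal_re]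
  rw [main_eq]
  have : 0 ≤ ∑ y, (Matrix.trace (C y * M y * C y * R)).re :=
    Finset.sum_nonneg fun y _ => hpos y
  linarith
end
end

section
/- The real weak value solves the post-measurement GCE equation (Eq. (47) of the paper): let ρ̄ be a density matrix, B₁ a Hermitian matrix on the same space, Y a finite outcome set, and (M_y)_{y∈Y} a POVM with tr(M_y·ρ̄) > 0 for every y. Define the real weak value b(y) = Re tr(M_y·B₁·ρ̄)/tr(M_y·ρ̄) and set B = Σ_y b(y)·e_y e_yᴴ. Then B solves the Jordan GCE equation for (ρ̄, G, B₁), i.e. (G(ρ̄)·B + B·G(ρ̄))/2 = G((ρ̄·B₁ + B₁·ρ̄)/2), where G is the measurement channel of the POVM. -/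
open Matrix BigOperators ComplexOrder

noncomputable section

/-- The measurement channel of a POVM `(M_y)`: `G(τ) = Σ_y tr(M_y τ) e_y e_yᴴ`. -/
def povmChannel {d Y : Type*} [Fintype d] [Fintype Y] [DecidableEq Y]
    (M : Y → Matrix d d ℂ) (τ : Matrix d d ℂ) : Matrix Y Y ℂ :=
  ∑ y, Matrix.trace (M y * τ) • Matrix.single y y (1 : ℂ)

/-! Both sides are diagonal in the outcome basis, so the equation reduces to one scalar identity
per outcome `y`: since `M y`, `ρbar` and `B₁` are Hermitian, `tr (M y * ρbar)` is real and
`tr (M y * jordan ρbar B₁) = Re tr (M y * B₁ * ρbar)`, which is `b y * tr (M y * ρbar)`. -/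

lemma sum_smul_single_one_eq_diagonal {Y : Type*} [Fintype Y] [DecidableEq Y] (c : Y → ℂ) :
    ∑ y, c y • single y y (1 : ℂ) = diagonal c := by
  simp only [smul_single, smul_eq_mul, mul_one, sum_single_eq_diagonal]

lemma povmChannel_eq_diagonal {d Y : Type*} [Fintype d] [Fintype Y] [DecidableEq Y]
    (M : Y → Matrix d d ℂ) (τ : Matrix d d ℂ) :
    povmChannel M τ = diagonal fun y ↦ trace (M y * τ) :=
  sum_smul_single_one_eq_diagonal _

lemma jordan_diagonal {Y : Type*} [Fintype Y] [DecidableEq Y] (s c : Y → ℂ) :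
    jordan (diagonal s) (diagonal c) = diagonal (s * c) := by
  rw [jordan, diagonal_mul_diagonal, diagonal_mul_diagonal, diagonal_add, ← diagonal_smul]
  congr 1
  funext y
  simp only [Pi.smul_apply, Pi.mul_apply, smul_eq_mul]
  ring

namespace Matrix.IsHermitian

variable {d : Type*} [Fintype d] {X Y Z : Matrix d d ℂ}

lemma star_trace_mul (hX : X.IsHermitian) (hY : Y.IsHermitian) :
    star (trace (X * Y)) = trace (X * Y) := by
  rw [← trace_conjTranspose, conjTranspose_mul, hX.eq, hY.eq, trace_mul_comm]

lemma star_trace_mul_mul (hX : X.IsHermitian) (hY : Y.IsHermitian) (hZ : Z.IsHermitian) :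
    star (trace (X * Y * Z)) = trace (X * Z * Y) := by
  rw [← trace_conjTranspose, conjTranspose_mul, conjTranspose_mul, hX.eq, hY.eq, hZ.eq,
    ← Matrix.mul_assoc, trace_mul_cycle]

lemma trace_mul_eq_re (hX : X.IsHermitian) (hY : Y.IsHermitian) :
    trace (X * Y) = (trace (X * Y)).re :=
  (Complex.conj_eq_iff_re.mp (hX.star_trace_mul hY)).symm

lemma trace_mul_jordan (hX : X.IsHermitian) (hY : Y.IsHermitian) (hZ : Z.IsHermitian) :
    trace (X * jordan Y Z) = (trace (X * Z * Y)).re := by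
  rw [jordan, Matrix.mul_smul, trace_smul, Matrix.mul_add, trace_add, ← Matrix.mul_assoc,
    ← Matrix.mul_assoc, ← hX.star_trace_mul_mul hZ hY, add_comm, Complex.star_def,
    Complex.add_conj]
  push_cast
  ring

end Matrix.IsHermitian

theorem weak_value_solves_gce_general {d Y : Type*} [Fintype d] [DecidableEq d]
    [Fintype Y] [DecidableEq Y]
    (ρbar : Matrix d d ℂ) (hρ : IsDensity ρbar)
    (B₁ : Matrix d d ℂ) (hB₁ : B₁.IsHermitian)
    (M : Y → Matrix d d ℂ) (hMpos : ∀ y, (M y).PosSemidef)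
    (hMtr : ∀ y, 0 < (Matrix.trace (M y * ρbar)).re)
    (b : Y → ℝ)
    (hb : ∀ y, b y = (Matrix.trace (M y * B₁ * ρbar)).re / (Matrix.trace (M y * ρbar)).re)
    (B : Matrix Y Y ℂ)
    (hB : B = ∑ y, ((b y : ℂ)) • Matrix.single y y (1 : ℂ)) :
    jordan (povmChannel M ρbar) B = povmChannel M (jordan ρbar B₁) := by
  rw [hB, sum_smul_single_one_eq_diagonal, povmChannel_eq_diagonal, povmChannel_eq_diagonal,
    jordan_diagonal]
  congr 1
  funext y
  have hM := (hMpos y).isHermitian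
  have hρH := hρ.1.isHermitian
  rw [Pi.mul_apply, hM.trace_mul_jordan hρH hB₁, mul_comm, hM.trace_mul_eq_re hρH, hb y,
    ← Complex.ofReal_mul, div_mul_cancel₀ _ (hMtr y).ne']

/-- The real weak value solves the post-measurement GCE equation. -/
theorem weak_value_solves_gce {d Y : Type*} [Fintype d] [DecidableEq d]
    [Fintype Y] [DecidableEq Y]
    (ρbar : Matrix d d ℂ) (hρ : IsDensity ρbar)
    (B₁ : Matrix d d ℂ) (hB₁ : B₁.IsHermitian)
    (M : Y → Matrix d d ℂ) (hMpos : ∀ y, (M y).PosSemidef) (hMsum : ∑ y, M y = 1)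
    (hMtr : ∀ y, 0 < (Matrix.trace (M y * ρbar)).re)
    (b : Y → ℝ)
    (hb : ∀ y, b y = (Matrix.trace (M y * B₁ * ρbar)).re / (Matrix.trace (M y * ρbar)).re)
    (B : Matrix Y Y ℂ)
    (hB : B = ∑ y, ((b y : ℂ)) • Matrix.single y y (1 : ℂ)) :
    jordan (povmChannel M ρbar) B = povmChannel M (jordan ρbar B₁) :=
  weak_value_solves_gce_general ρbar hρ B₁ hB₁ M hMpos hMtr b hb B hB
end
end

section
/- Quantum Rao–Blackwell theorem (Theorem 3): let X be an arbitrary parameter set, (ρ_x)_{x∈X} density matrices on a common space, a : X → ℝ, B a Hermitian matrix, and G a CPTP map. Suppose B′ is a Hermitian matrix on the output space such that for every x ∈ X, B′ solves the Jordan GCE equation for (ρ_x, G, B). Then for every x ∈ X, the local mean-square errors satisfy MSE_x − MSE′_x = D_{ρ_x,G}(B,B′), where MSE_x = Re tr((B − a(x)·1)²·ρ_x) and MSE′_x = Re tr((B′ − a(x)·1)²·G(ρ_x)); in particular MSE′_x ≤ MSE_x for every x. -/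
open Matrix BigOperators ComplexOrder

noncomputable section

section QRBAux

variable {n m ι : Type*} [Fintype n] [DecidableEq n] [Fintype m] [DecidableEq m] [Fintype ι]

lemma qrb_trace_psd_re_nonneg (M : Matrix n n ℂ) (hM : M.PosSemidef) : 0 ≤ (M.trace).re := by
  have h : ∀ i, 0 ≤ M i i := by
    intro i
    exact hM.diag_nonneg
  have : 0 ≤ M.trace := Finset.sum_nonneg fun i _ => h i
  exact (Complex.le_def.mp this).1

omit [DecidableEq m] in
lemma qrb_trace_krausMap (K : ι → Matrix m n ℂ) (hK : TracePreserving K)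
    (σ : Matrix n n ℂ) : (krausMap K σ).trace = σ.trace := by
  rw [krausMap, trace_sum]
  have h : ∀ i : ι, (K i * σ * (K i)ᴴ).trace = ((K i)ᴴ * K i * σ).trace := by
    intro i
    rw [trace_mul_cycle]
  rw [Finset.sum_congr rfl fun i _ => h i, ← trace_sum, ← Finset.sum_mul, hK, one_mul]

omit [DecidableEq n] [DecidableEq m] in
lemma qrb_trace_adj_mul (K : ι → Matrix m n ℂ) (Y : Matrix m m ℂ) (Z : Matrix n n ℂ) :
    (krausAdj K Y * Z).trace = (Y * krausMap K Z).trace := by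
  rw [krausAdj, Finset.sum_mul, trace_sum]
  have h : ∀ i : ι, ((K i)ᴴ * Y * K i * Z).trace = (Y * (K i * Z * (K i)ᴴ)).trace := by
    intro i
    calc ((K i)ᴴ * Y * K i * Z).trace = ((K i)ᴴ * (Y * K i * Z)).trace := by
          congr 1; simp [Matrix.mul_assoc]
      _ = ((Y * K i * Z) * (K i)ᴴ).trace := trace_mul_comm _ _
      _ = (Y * (K i * Z * (K i)ᴴ)).trace := by congr 1; simp [Matrix.mul_assoc]
  rw [Finset.sum_congr rfl fun i _ => h i, ← trace_sum, ← Finset.mul_sum, krausMap]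

omit [DecidableEq n] [DecidableEq m] in
lemma qrb_trace_jordan (σ A : Matrix n n ℂ) : (jordan σ A).trace = (A * σ).trace := by
  simp only [jordan, trace_smul, trace_add, trace_mul_comm σ A, smul_eq_mul]
  ring

omit [DecidableEq n] [DecidableEq m] in
lemma qrb_trace_mul_jordan {d : Type*} [Fintype d] (M σ A : Matrix d d ℂ) :
    (M * jordan σ A).trace = ((1:ℂ)/2) * ((M * (σ * A)).trace + (M * (A * σ)).trace) := by
  simp only [jordan, Matrix.mul_smul, trace_smul, mul_add, trace_add, smul_eq_mul]

omit [DecidableEq m] in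
/-- Key identity: the sum of traces of the PSD matrices `C_i σ C_iᴴ`, with
`C_i = B' K_i − K_i B`, equals the (complexified) divergence. -/
lemma qrb_key (σ : Matrix n n ℂ) (K : ι → Matrix m n ℂ) (hK : TracePreserving K)
    (B : Matrix n n ℂ) (hB : B.IsHermitian) (B' : Matrix m m ℂ) (hB' : B'.IsHermitian) :
    ∑ i, ((B' * K i - K i * B) * σ * (B' * K i - K i * B)ᴴ).trace
      = (B * B * σ).trace - 2 * (krausAdj K B' * jordan σ B).trace
        + (B' * B' * krausMap K σ).trace := by
  have per : ∀ i : ι, ((B' * K i - K i * B) * σ * (B' * K i - K i * B)ᴴ).trace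
      = (B' * B' * (K i * σ * (K i)ᴴ)).trace
        - (((K i)ᴴ * B' * K i * (σ * B)).trace + ((K i)ᴴ * B' * K i * (B * σ)).trace)
        + ((K i)ᴴ * K i * (B * σ * B)).trace := by
    intro i
    have hCt : (B' * K i - K i * B)ᴴ = (K i)ᴴ * B' - B * (K i)ᴴ := by
      simp [conjTranspose_sub, conjTranspose_mul, hB.eq, hB'.eq]
    have h1 : (B' * K i * σ * ((K i)ᴴ * B')).trace = (B' * B' * (K i * σ * (K i)ᴴ)).trace := by
      calc (B' * K i * σ * ((K i)ᴴ * B')).trace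
          = ((B' * K i * σ * (K i)ᴴ) * B').trace := by congr 1; simp [Matrix.mul_assoc]
        _ = (B' * (B' * K i * σ * (K i)ᴴ)).trace := trace_mul_comm _ _
        _ = (B' * B' * (K i * σ * (K i)ᴴ)).trace := by congr 1; simp [Matrix.mul_assoc]
    have h2 : (B' * K i * σ * (B * (K i)ᴴ)).trace = ((K i)ᴴ * B' * K i * (σ * B)).trace := by
      calc (B' * K i * σ * (B * (K i)ᴴ)).trace
          = ((B' * K i * σ * B) * (K i)ᴴ).trace := by congr 1; simp [Matrix.mul_assoc]
        _ = ((K i)ᴴ * (B' * K i * σ * B)).trace := trace_mul_comm _ _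
        _ = ((K i)ᴴ * B' * K i * (σ * B)).trace := by congr 1; simp [Matrix.mul_assoc]
    have h3 : (K i * B * σ * ((K i)ᴴ * B')).trace = ((K i)ᴴ * B' * K i * (B * σ)).trace := by
      calc (K i * B * σ * ((K i)ᴴ * B')).trace
          = (((K i)ᴴ * B') * (K i * B * σ)).trace := trace_mul_comm _ _
        _ = ((K i)ᴴ * B' * K i * (B * σ)).trace := by congr 1; simp [Matrix.mul_assoc]
    have h4 : (K i * B * σ * (B * (K i)ᴴ)).trace = ((K i)ᴴ * K i * (B * σ * B)).trace := by
      calc (K i * B * σ * (B * (K i)ᴴ)).trace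
          = ((K i * B * σ * B) * (K i)ᴴ).trace := by congr 1; simp [Matrix.mul_assoc]
        _ = ((K i)ᴴ * (K i * B * σ * B)).trace := trace_mul_comm _ _
        _ = ((K i)ᴴ * K i * (B * σ * B)).trace := by congr 1; simp [Matrix.mul_assoc]
    rw [hCt]
    simp only [Matrix.sub_mul, Matrix.mul_sub, trace_sub]
    rw [h1, h2, h3, h4]
    ring
  rw [Finset.sum_congr rfl fun i _ => per i]
  have s1 : ∑ i : ι, (B' * B' * (K i * σ * (K i)ᴴ)).trace
      = (B' * B' * krausMap K σ).trace := by
    rw [← trace_sum, ← Finset.mul_sum, krausMap]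
  have s2 : ∑ i : ι, ((K i)ᴴ * B' * K i * (σ * B)).trace
      = (krausAdj K B' * (σ * B)).trace := by
    rw [← trace_sum, ← Finset.sum_mul, krausAdj]
  have s3 : ∑ i : ι, ((K i)ᴴ * B' * K i * (B * σ)).trace
      = (krausAdj K B' * (B * σ)).trace := by
    rw [← trace_sum, ← Finset.sum_mul, krausAdj]
  have s4 : ∑ i : ι, ((K i)ᴴ * K i * (B * σ * B)).trace = (B * B * σ).trace := by
    rw [← trace_sum, ← Finset.sum_mul, hK, one_mul]
    calc (B * σ * B).trace = (B * (B * σ)).trace := trace_mul_comm _ _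
      _ = (B * B * σ).trace := by congr 1; simp [Matrix.mul_assoc]
  have s5 : 2 * (krausAdj K B' * jordan σ B).trace
      = (krausAdj K B' * (σ * B)).trace + (krausAdj K B' * (B * σ)).trace := by
    rw [qrb_trace_mul_jordan]
    ring
  simp only [Finset.sum_sub_distrib, Finset.sum_add_distrib, s1, s2, s3, s4, s5]
  ring

omit [DecidableEq m] in
lemma qrb_nsq_shift {d : Type*} [Fintype d] [DecidableEq d] (σ A : Matrix d d ℂ) (a : ℝ) :
    nsq σ (A - (a : ℂ) • 1)
      = ((A * A * σ).trace).re - 2 * a * ((A * σ).trace).re + a ^ 2 * (σ.trace).re := by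
  have expand : (A - (a : ℂ) • 1) * (A - (a : ℂ) • 1) * σ
      = A * A * σ - (a : ℂ) • (A * σ) - (a : ℂ) • (A * σ)
        + ((a * a : ℝ) : ℂ) • σ := by
    push_cast
    simp only [sub_mul, mul_sub, Matrix.smul_mul, Matrix.mul_smul, Matrix.one_mul,
      Matrix.mul_one, smul_smul]
    abel
  rw [nsq, expand]
  simp only [trace_sub, trace_add, trace_smul, smul_eq_mul, Complex.sub_re, Complex.add_re,
    Complex.mul_re, Complex.ofReal_re, Complex.ofReal_im]
  ring

end QRBAux

/-- Quantum Rao–Blackwell theorem. -/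
theorem quantum_rao_blackwell {X n m ι : Type*} [Fintype n] [DecidableEq n]
    [Fintype m] [DecidableEq m] [Fintype ι]
    (ρ : X → Matrix n n ℂ) (hρ : ∀ x, IsDensity (ρ x))
    (a : X → ℝ)
    (B : Matrix n n ℂ) (hB : B.IsHermitian)
    (K : ι → Matrix m n ℂ) (hK : TracePreserving K)
    (B' : Matrix m m ℂ) (hB' : B'.IsHermitian)
    (hGCE : ∀ x, SolvesGCE (ρ x) K B B') :
    ∀ x,
      nsq (ρ x) (B - (a x : ℂ) • 1)
          - nsq (krausMap K (ρ x)) (B' - (a x : ℂ) • 1)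
        = Dvg (ρ x) K B B' ∧
      nsq (krausMap K (ρ x)) (B' - (a x : ℂ) • 1) ≤ nsq (ρ x) (B - (a x : ℂ) • 1) := by
  intro x
  obtain ⟨hσpsd, hσtr⟩ := hρ x
  set σ := ρ x with hσdef
  have hFσ : (krausMap K σ).trace = 1 := by rw [qrb_trace_krausMap K hK, hσtr]
  -- cross term: tr(B' Fσ) = tr(B σ)
  have hc : (B' * krausMap K σ).trace = (B * σ).trace := by
    have := congrArg Matrix.trace (hGCE x)
    rw [qrb_trace_jordan, qrb_trace_krausMap K hK, qrb_trace_jordan] at this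
    exact this
  -- tr(F*(B') · E_σ(B)) = tr(B'² Fσ)
  have ht2 : (krausAdj K B' * jordan σ B).trace = (B' * B' * krausMap K σ).trace := by
    rw [qrb_trace_adj_mul, ← (hGCE x), qrb_trace_mul_jordan]
    have e1 : (B' * (krausMap K σ * B')).trace = (B' * B' * krausMap K σ).trace := by
      calc (B' * (krausMap K σ * B')).trace
          = ((krausMap K σ * B') * B').trace := trace_mul_comm _ _
        _ = (krausMap K σ * (B' * B')).trace := by congr 1; simp [Matrix.mul_assoc]
        _ = (B' * B' * krausMap K σ).trace := trace_mul_comm _ _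
    have e2 : (B' * (B' * krausMap K σ)).trace = (B' * B' * krausMap K σ).trace := by
      congr 1; simp [Matrix.mul_assoc]
    rw [e1, e2]
    ring
  have heq : nsq σ (B - (a x : ℂ) • 1) - nsq (krausMap K σ) (B' - (a x : ℂ) • 1)
      = Dvg σ K B B' := by
    rw [qrb_nsq_shift, qrb_nsq_shift, hFσ, hσtr, Dvg, nsq, nsq, ht2]
    have : ((B' * krausMap K σ).trace).re = ((B * σ).trace).re := by rw [hc]
    rw [this]
    simp only [Complex.one_re]
    ring
  have hDnonneg : 0 ≤ Dvg σ K B B' := by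
    have hkey := qrb_key σ K hK B hB B' hB'
    have hsum : 0 ≤ (∑ i, ((B' * K i - K i * B) * σ * (B' * K i - K i * B)ᴴ).trace).re := by
      rw [Complex.re_sum]
      refine Finset.sum_nonneg fun i _ => ?_
      exact qrb_trace_psd_re_nonneg _ (hσpsd.mul_mul_conjTranspose_same _)
    rw [hkey] at hsum
    have : Dvg σ K B B'
        = ((B * B * σ).trace - 2 * (krausAdj K B' * jordan σ B).trace
            + (B' * B' * krausMap K σ).trace).re := by
      simp only [Dvg, nsq, Complex.add_re, Complex.sub_re, Complex.mul_re, Complex.re_ofNat,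
        Complex.im_ofNat]
      ring
    rw [this]
    exact hsum
  exact ⟨heq, by linarith⟩
end
end

section
/- GCE for discarding an independent ancilla (Lemma 3): let σ be a density matrix indexed by a finite type n, τ a density matrix indexed by a finite type n₀, and B a Hermitian matrix on the Kronecker-product index type n × n₀. Then B′ = Tr₂[(1 ⊗ τ)·B] is Hermitian and satisfies (σ·B′ + B′·σ)/2 = Tr₂[((σ ⊗ τ)·B + B·(σ ⊗ τ))/2]; that is, B′ solves the Jordan GCE equation for the state σ ⊗ τ and the partial-trace channel Tr₂ (which maps σ ⊗ τ to σ). -/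
open Matrix BigOperators ComplexOrder

noncomputable section

open Kronecker

/-- Partial trace over the second tensor factor:
`(Tr₂ M)(i,j) = Σ_k M((i,k),(j,k))`. -/
def ptrace₂ {n n₀ : Type*} [Fintype n₀] (M : Matrix (n × n₀) (n × n₀) ℂ) :
    Matrix n n ℂ :=
  Matrix.of fun i j => ∑ k, M (i, k) (j, k)


section PtraceLemmas

variable {n n₀ : Type*} [Fintype n] [DecidableEq n] [Fintype n₀] [DecidableEq n₀]

omit [DecidableEq n] in
lemma ptr_left (A : Matrix n n ℂ) (M : Matrix (n × n₀) (n × n₀) ℂ) :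
    ptrace₂ ((A ⊗ₖ (1 : Matrix n₀ n₀ ℂ)) * M) = A * ptrace₂ M := by
  ext i j
  simp only [ptrace₂, Matrix.of_apply, mul_apply, Fintype.sum_prod_type,
    kroneckerMap_apply, one_apply, mul_ite, mul_zero, mul_one, ite_mul, zero_mul,
    Finset.sum_ite_eq, Finset.mem_univ, if_true, Finset.mul_sum]
  exact Finset.sum_comm

omit [DecidableEq n] in
lemma ptr_right (A : Matrix n n ℂ) (M : Matrix (n × n₀) (n × n₀) ℂ) :
    ptrace₂ (M * (A ⊗ₖ (1 : Matrix n₀ n₀ ℂ))) = ptrace₂ M * A := by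
  ext i j
  simp only [ptrace₂, Matrix.of_apply, mul_apply, Fintype.sum_prod_type,
    kroneckerMap_apply, one_apply, mul_ite, mul_zero, mul_one, ite_mul, zero_mul,
    Finset.sum_ite_eq, Finset.sum_ite_eq', Finset.mem_univ, if_true, Finset.sum_mul]
  exact Finset.sum_comm

omit [DecidableEq n₀] in
lemma ptr_comm (τ : Matrix n₀ n₀ ℂ) (M : Matrix (n × n₀) (n × n₀) ℂ) :
    ptrace₂ (M * ((1 : Matrix n n ℂ) ⊗ₖ τ)) = ptrace₂ (((1 : Matrix n n ℂ) ⊗ₖ τ) * M) := by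
  ext i j
  simp only [ptrace₂, Matrix.of_apply, mul_apply, Fintype.sum_prod_type,
    kroneckerMap_apply, one_apply, mul_ite, mul_zero, ite_mul, zero_mul, one_mul, mul_one,
    Finset.sum_ite_irrel, Finset.sum_const_zero,
    Finset.sum_ite_eq, Finset.sum_ite_eq', Finset.mem_univ, if_true]
  rw [Finset.sum_comm]
  simp [mul_comm]

omit [DecidableEq n] [DecidableEq n₀] in
lemma ptr_add (M N : Matrix (n × n₀) (n × n₀) ℂ) :
    ptrace₂ (M + N) = ptrace₂ M + ptrace₂ N := by
  ext i j
  simp [ptrace₂, Finset.sum_add_distrib]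

omit [DecidableEq n] [DecidableEq n₀] in
lemma ptr_smul (c : ℂ) (M : Matrix (n × n₀) (n × n₀) ℂ) :
    ptrace₂ (c • M) = c • ptrace₂ M := by
  ext i j
  simp [ptrace₂, Finset.mul_sum]

omit [DecidableEq n] [DecidableEq n₀] in
lemma ptr_conjTranspose (M : Matrix (n × n₀) (n × n₀) ℂ) :
    (ptrace₂ M)ᴴ = ptrace₂ Mᴴ := by
  ext i j
  simp [ptrace₂, conjTranspose_apply]

omit [DecidableEq n] [DecidableEq n₀] in
lemma kron_conjTranspose (A : Matrix n n ℂ) (B : Matrix n₀ n₀ ℂ) :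
    (A ⊗ₖ B)ᴴ = Aᴴ ⊗ₖ Bᴴ := by
  ext ⟨i, k⟩ ⟨j, l⟩
  simp [conjTranspose_apply, kroneckerMap_apply]

end PtraceLemmas

/-- GCE for discarding an independent ancilla. -/
theorem gce_discard_ancilla {n n₀ : Type*} [Fintype n] [DecidableEq n]
    [Fintype n₀] [DecidableEq n₀]
    (σ : Matrix n n ℂ) (hσ : IsDensity σ)
    (τ : Matrix n₀ n₀ ℂ) (hτ : IsDensity τ)
    (B : Matrix (n × n₀) (n × n₀) ℂ) (hB : B.IsHermitian) :
    (ptrace₂ ((1 ⊗ₖ τ) * B)).IsHermitian ∧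
    jordan σ (ptrace₂ ((1 ⊗ₖ τ) * B)) = ptrace₂ (jordan (σ ⊗ₖ τ) B) := by
  have hτh : τ.IsHermitian := hτ.1.1
  have hcomm := ptr_comm τ B
  constructor
  · show _ = _
    rw [ptr_conjTranspose, conjTranspose_mul, hB.eq, kron_conjTranspose,
      conjTranspose_one, hτh.eq, hcomm]
  · have h1 : (σ ⊗ₖ τ) = (σ ⊗ₖ (1 : Matrix n₀ n₀ ℂ)) * ((1 : Matrix n n ℂ) ⊗ₖ τ) := by
      rw [← mul_kronecker_mul, mul_one, one_mul]
    have h2 : (σ ⊗ₖ τ) = ((1 : Matrix n n ℂ) ⊗ₖ τ) * (σ ⊗ₖ (1 : Matrix n₀ n₀ ℂ)) := by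
      rw [← mul_kronecker_mul, mul_one, one_mul]
    unfold jordan
    rw [ptr_smul, ptr_add]
    congr 1
    congr 1
    · rw [h1, Matrix.mul_assoc, ptr_left]
    · rw [h2, ← Matrix.mul_assoc, ptr_right, hcomm]
end
end

section
/- Averaged estimators dominate for invariant states (Corollary 5, finite form): let ρ be a density matrix, Z a finite set, (U_z)_{z∈Z} unitary matrices with U_z·ρ·U_zᴴ = ρ for every z, and μ : Z → ℝ≥0 with Σ_z μ_z = 1. Then for every Hermitian matrix B and every real number a: Re tr((Σ_z μ_z·U_z·B·U_zᴴ − a·1)²·ρ) ≤ Re tr((B − a·1)²·ρ). -/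
open Matrix BigOperators ComplexOrder

noncomputable section

private lemma trace_re_nonneg'_s15 {d : Type*} [Fintype d] [DecidableEq d] {M : Matrix d d ℂ}
    (hM : M.PosSemidef) : 0 ≤ (M.trace).re := by
  rw [Matrix.trace]
  simp only [Complex.re_sum]
  refine Finset.sum_nonneg fun i _ => ?_
  have := hM.re_dotProduct_nonneg (Pi.single i 1)
  simpa [Matrix.mulVec_single, Matrix.diag, dotProduct, Pi.single_apply, apply_ite,
    Finset.sum_ite_eq'] using this

private lemma sq_nonneg' {d : Type*} [Fintype d] [DecidableEq d] {ρ H : Matrix d d ℂ}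
    (hρ : ρ.PosSemidef) (hH : H.IsHermitian) : 0 ≤ (Matrix.trace (H * H * ρ)).re := by
  have h1 : Matrix.trace (H * H * ρ) = Matrix.trace (H * ρ * Hᴴ) := by
    rw [hH.eq]
    exact (Matrix.trace_mul_cycle H ρ H).symm
  rw [h1]
  exact trace_re_nonneg'_s15 (hρ.mul_mul_conjTranspose_same H)

private lemma re_symm' {d : Type*} [Fintype d] [DecidableEq d] {ρ X Y : Matrix d d ℂ}
    (hρ : ρ.IsHermitian) (hX : X.IsHermitian) (hY : Y.IsHermitian) :
    (Matrix.trace (Y * X * ρ)).re = (Matrix.trace (X * Y * ρ)).re := by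
  have : Matrix.trace (Y * X * ρ) = star (Matrix.trace (X * Y * ρ)) := by
    rw [← Matrix.trace_conjTranspose, Matrix.trace_mul_comm]
    simp [Matrix.conjTranspose_mul, hρ.eq, hX.eq, hY.eq, mul_assoc]
  rw [this, Complex.star_def, Complex.conj_re]

private lemma cross_bound' {d : Type*} [Fintype d] [DecidableEq d] {ρ X Y : Matrix d d ℂ}
    (hρ : ρ.PosSemidef) (hX : X.IsHermitian) (hY : Y.IsHermitian) :
    2 * (Matrix.trace (X * Y * ρ)).re ≤
      (Matrix.trace (X * X * ρ)).re + (Matrix.trace (Y * Y * ρ)).re := by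
  have h0 := sq_nonneg' hρ (hX.sub hY)
  have hexp : Matrix.trace ((X - Y) * (X - Y) * ρ) =
      Matrix.trace (X * X * ρ) - Matrix.trace (X * Y * ρ)
        - Matrix.trace (Y * X * ρ) + Matrix.trace (Y * Y * ρ) := by
    simp only [Matrix.sub_mul, Matrix.mul_sub, Matrix.trace_sub]
    ring
  rw [hexp] at h0
  simp only [Complex.sub_re, Complex.add_re] at h0
  rw [re_symm' hρ.1 hX hY] at h0
  linarith

/-- Averaged estimators dominate for invariant states. -/
theorem averaged_estimator_dominates {d Z : Type*} [Fintype d] [DecidableEq d] [Fintype Z]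
    (ρ : Matrix d d ℂ) (hρ : IsDensity ρ)
    (U : Z → Matrix d d ℂ)
    (hU : ∀ z, U z * (U z)ᴴ = 1 ∧ (U z)ᴴ * U z = 1)
    (hinv : ∀ z, U z * ρ * (U z)ᴴ = ρ)
    (μ : Z → ℝ) (hμ : ∀ z, 0 ≤ μ z) (hμsum : ∑ z, μ z = 1)
    (B : Matrix d d ℂ) (hB : B.IsHermitian) (a : ℝ) :
    (Matrix.trace (((∑ z, (μ z : ℂ) • (U z * B * (U z)ᴴ)) - (a : ℂ) • 1)
        * ((∑ z, (μ z : ℂ) • (U z * B * (U z)ᴴ)) - (a : ℂ) • 1) * ρ)).re ≤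
      (Matrix.trace ((B - (a : ℂ) • 1) * (B - (a : ℂ) • 1) * ρ)).re := by
  obtain ⟨hρP, -⟩ := hρ
  set D : Matrix d d ℂ := B - (a : ℂ) • 1 with hDdef
  have hD : D.IsHermitian := by
    have h1 : ((a : ℂ) • (1 : Matrix d d ℂ)).IsHermitian := by
      simp [Matrix.IsHermitian, Matrix.conjTranspose_smul]
    exact hB.sub h1
  set C : Z → Matrix d d ℂ := fun z => U z * D * (U z)ᴴ with hCdef
  have hC : ∀ z, (C z).IsHermitian := by
    intro z
    simp [Matrix.IsHermitian, hCdef, Matrix.conjTranspose_mul, hD.eq, mul_assoc]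
  -- rewrite LHS matrix as a sum
  have hCz : ∀ z, C z = U z * B * (U z)ᴴ - (a : ℂ) • 1 := by
    intro z
    simp only [hCdef, hDdef, Matrix.mul_sub, Matrix.sub_mul]
    congr 1
    rw [Matrix.mul_smul, Matrix.smul_mul, Matrix.mul_one, (hU z).1]
  have hμc : ∑ z, (μ z : ℂ) = 1 := by
    rw [← Complex.ofReal_sum, hμsum, Complex.ofReal_one]
  have hS : (∑ z, (μ z : ℂ) • (U z * B * (U z)ᴴ)) - (a : ℂ) • 1 = ∑ z, (μ z : ℂ) • C z := by
    simp only [hCz, smul_sub]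
    rw [Finset.sum_sub_distrib, ← Finset.sum_smul, hμc, one_smul]
  rw [hS]
  -- invariance: C z has the same ρ-second-moment as D
  have hinv' : ∀ z, (U z)ᴴ * ρ * U z = ρ := by
    intro z
    calc (U z)ᴴ * ρ * U z = (U z)ᴴ * (U z * ρ * (U z)ᴴ) * U z := by rw [hinv z]
    _ = ((U z)ᴴ * U z) * ρ * ((U z)ᴴ * U z) := by simp only [mul_assoc]
    _ = ρ := by rw [(hU z).2, one_mul, mul_one]
  have hq : ∀ z, Matrix.trace (C z * C z * ρ) = Matrix.trace (D * D * ρ) := by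
    intro z
    have h1 : C z * C z = U z * (D * D) * (U z)ᴴ := by
      simp only [hCdef]
      calc U z * D * (U z)ᴴ * (U z * D * (U z)ᴴ)
          = U z * D * ((U z)ᴴ * U z) * D * (U z)ᴴ := by simp only [mul_assoc]
        _ = U z * (D * D) * (U z)ᴴ := by rw [(hU z).2]; simp only [mul_one, mul_assoc]
    rw [h1]
    calc Matrix.trace (U z * (D * D) * (U z)ᴴ * ρ)
        = Matrix.trace (U z * ((D * D) * ((U z)ᴴ * ρ))) := by
          congr 1; simp only [mul_assoc]
      _ = Matrix.trace ((D * D) * ((U z)ᴴ * ρ) * U z) := by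
          rw [Matrix.trace_mul_comm]
      _ = Matrix.trace (D * D * ((U z)ᴴ * ρ * U z)) := by
          congr 1; simp only [mul_assoc]
      _ = Matrix.trace (D * D * ρ) := by rw [hinv' z]
  set q : ℝ := (Matrix.trace (D * D * ρ)).re with hqdef
  -- cross bound
  have hcross : ∀ z w, (Matrix.trace (C z * C w * ρ)).re ≤ q := by
    intro z w
    have := cross_bound' hρP (hC z) (hC w)
    rw [hq z, hq w] at this
    linarith
  -- expand the quadratic
  have hexp : Matrix.trace ((∑ z, (μ z : ℂ) • C z) * (∑ z, (μ z : ℂ) • C z) * ρ) =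
      ∑ z, ∑ w, (μ z : ℂ) * ((μ w : ℂ) * Matrix.trace (C z * C w * ρ)) := by
    rw [Finset.sum_mul_sum]
    simp only [Finset.sum_mul, Matrix.trace_sum, Matrix.smul_mul, Matrix.mul_smul,
      Matrix.trace_smul, smul_eq_mul, smul_smul]
    congr 1; funext z; congr 1; funext w
    ring
  rw [hexp]
  have hre : (∑ z, ∑ w, (μ z : ℂ) * ((μ w : ℂ) * Matrix.trace (C z * C w * ρ))).re =
      ∑ z, ∑ w, μ z * (μ w * (Matrix.trace (C z * C w * ρ)).re) := by
    rw [Complex.re_sum]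
    congr 1; funext z
    rw [Complex.re_sum]
    congr 1; funext w
    rw [Complex.re_ofReal_mul, Complex.re_ofReal_mul]
  rw [hre]
  calc ∑ z, ∑ w, μ z * (μ w * (Matrix.trace (C z * C w * ρ)).re)
      ≤ ∑ z, ∑ w, μ z * (μ w * q) := by
        refine Finset.sum_le_sum fun z _ => Finset.sum_le_sum fun w _ => ?_
        exact mul_le_mul_of_nonneg_left
          (mul_le_mul_of_nonneg_left (hcross z w) (hμ w)) (hμ z)
    _ = q := by
        simp only [← Finset.mul_sum, ← Finset.sum_mul, hμsum]
        ring
end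
end

section
/- Rao–Blackwellizing the Personick estimator leaves the errors unchanged (Corollary 9): in the Bayesian setup, let B* be a Personick estimator, G a CPTP map, and suppose the Hermitian matrix B′ solves the Jordan GCE equation for (ρ_x, G, B*) for every x ∈ X. Then: (i) B′ is a Personick estimator for the post-channel family, i.e. G(ρ̄)·B′ + B′·G(ρ̄) = 2·Σ_x P(x)·a(x)·G(ρ_x); (ii) the Bayesian errors agree: Σ_x P(x)·Re tr((B* − a(x)·1)²·ρ_x) = Σ_x P(x)·Re tr((B′ − a(x)·1)²·G(ρ_x)); and (iii) the local errors agree on the support of the prior: for every x with P(x) > 0, Re tr((B* − a(x)·1)²·ρ_x) = Re tr((B′ − a(x)·1)²·G(ρ_x)). -/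
open Matrix BigOperators ComplexOrder

noncomputable section

section Aux

set_option linter.unusedSectionVars false

variable {n m ι : Type*} [Fintype n] [DecidableEq n] [Fintype m] [DecidableEq m] [Fintype ι]

lemma trace_psd_re_nonneg {N : Matrix m m ℂ} (h : N.PosSemidef) : 0 ≤ N.trace.re := by
  obtain ⟨B, rfl⟩ : ∃ B : Matrix m m ℂ, N = Bᴴ * B := by
    open scoped MatrixOrder in exact CStarAlgebra.nonneg_iff_eq_star_mul_self.mp h.nonneg
  simp only [Matrix.trace, Matrix.diag, Matrix.mul_apply, Matrix.conjTranspose_apply,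
    Complex.re_sum]
  refine Finset.sum_nonneg fun i _ => Finset.sum_nonneg fun j _ => ?_
  simp only [Complex.mul_re, Complex.conj_re, Complex.conj_im, RCLike.star_def]
  nlinarith [sq_nonneg (B j i).re, sq_nonneg (B j i).im]

lemma trace_jordan_s19 (σ A : Matrix n n ℂ) : (jordan σ A).trace = (σ * A).trace := by
  simp [jordan, Matrix.trace_smul, Matrix.trace_mul_comm A σ, smul_eq_mul]
  ring

lemma krausMap_trace (K : ι → Matrix m n ℂ) (hK : TracePreserving K) (X : Matrix n n ℂ) :
    (krausMap K X).trace = X.trace := by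
  have h : ∀ i : ι, (K i * X * (K i)ᴴ).trace = ((K i)ᴴ * K i * X).trace := fun i => by
    rw [Matrix.trace_mul_cycle, Matrix.mul_assoc]
  rw [krausMap, Matrix.trace_sum, Finset.sum_congr rfl fun i _ => h i, ← Matrix.trace_sum,
    ← Finset.sum_mul, hK, one_mul]

lemma trace_adj_mul (K : ι → Matrix m n ℂ) (B : Matrix m m ℂ) (C : Matrix n n ℂ) :
    (krausAdj K B * C).trace = (B * krausMap K C).trace := by
  simp only [krausAdj, krausMap, Finset.sum_mul, Finset.mul_sum, Matrix.trace_sum]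
  refine Finset.sum_congr rfl fun i _ => ?_
  calc ((K i)ᴴ * B * K i * C).trace
      = ((K i)ᴴ * B * (K i * C)).trace := by rw [Matrix.mul_assoc]
    _ = ((K i * C) * ((K i)ᴴ * B)).trace := Matrix.trace_mul_comm _ _
    _ = ((K i * C) * (K i)ᴴ * B).trace := by rw [← Matrix.mul_assoc]
    _ = (B * (K i * C * (K i)ᴴ)).trace := Matrix.trace_mul_comm _ _

lemma trace_mul_jordan_self (σ B : Matrix m m ℂ) :
    (B * jordan σ B).trace = (B * B * σ).trace := by
  have h1 : (B * (σ * B)).trace = (B * B * σ).trace := by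
    rw [Matrix.trace_mul_comm, Matrix.mul_assoc, Matrix.trace_mul_comm]
  have h2 : (B * (B * σ)).trace = (B * B * σ).trace := by rw [← Matrix.mul_assoc]
  rw [jordan, Matrix.mul_smul, Matrix.mul_add, Matrix.trace_smul, Matrix.trace_add, h1, h2,
    smul_eq_mul]
  ring

lemma dvg_term (K : ι → Matrix m n ℂ) (σ A : Matrix n n ℂ) (B : Matrix m m ℂ)
    (hA : Aᴴ = A) (hB : Bᴴ = B) (i : ι) :
    ((K i * A - B * K i) * σ * (K i * A - B * K i)ᴴ).trace
      = ((K i)ᴴ * K i * (A * (σ * A))).trace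
        - ((K i)ᴴ * (B * (K i * (σ * A)))).trace
        - ((K i)ᴴ * (B * (K i * (A * σ)))).trace
        + (B * (B * (K i * (σ * (K i)ᴴ)))).trace := by
  have hct : (K i * A - B * K i)ᴴ = A * (K i)ᴴ - (K i)ᴴ * B := by
    simp [Matrix.conjTranspose_sub, Matrix.conjTranspose_mul, hA, hB]
  have T1 : ((K i * A) * σ * (A * (K i)ᴴ)).trace = ((K i)ᴴ * K i * (A * (σ * A))).trace := by
    calc ((K i * A) * σ * (A * (K i)ᴴ)).trace
        = ((K i * A * σ * A) * (K i)ᴴ).trace := by rw [← Matrix.mul_assoc]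
      _ = ((K i)ᴴ * (K i * A * σ * A)).trace := Matrix.trace_mul_comm _ _
      _ = ((K i)ᴴ * K i * (A * (σ * A))).trace := by simp only [Matrix.mul_assoc]
  have T2 : ((B * K i) * σ * (A * (K i)ᴴ)).trace = ((K i)ᴴ * (B * (K i * (σ * A)))).trace := by
    calc ((B * K i) * σ * (A * (K i)ᴴ)).trace
        = ((B * K i * σ * A) * (K i)ᴴ).trace := by rw [← Matrix.mul_assoc]
      _ = ((K i)ᴴ * (B * K i * σ * A)).trace := Matrix.trace_mul_comm _ _
      _ = ((K i)ᴴ * (B * (K i * (σ * A)))).trace := by simp only [Matrix.mul_assoc]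
  have T3 : ((K i * A) * σ * ((K i)ᴴ * B)).trace = ((K i)ᴴ * (B * (K i * (A * σ)))).trace := by
    calc ((K i * A) * σ * ((K i)ᴴ * B)).trace
        = (((K i)ᴴ * B) * (K i * A * σ)).trace := (Matrix.trace_mul_comm _ _).symm
      _ = ((K i)ᴴ * (B * (K i * (A * σ)))).trace := by simp only [Matrix.mul_assoc]
  have T4 : ((B * K i) * σ * ((K i)ᴴ * B)).trace = (B * (B * (K i * (σ * (K i)ᴴ)))).trace := by
    calc ((B * K i) * σ * ((K i)ᴴ * B)).trace
        = ((B * K i * σ * (K i)ᴴ) * B).trace := by rw [← Matrix.mul_assoc]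
      _ = (B * (B * K i * σ * (K i)ᴴ)).trace := Matrix.trace_mul_comm _ _
      _ = (B * (B * (K i * (σ * (K i)ᴴ)))).trace := by simp only [Matrix.mul_assoc]
  rw [hct, Matrix.sub_mul, Matrix.sub_mul, Matrix.mul_sub, Matrix.mul_sub,
    Matrix.trace_sub, Matrix.trace_sub, Matrix.trace_sub, T1, T2, T3, T4]
  ring

lemma dvg_expand (K : ι → Matrix m n ℂ) (hK : TracePreserving K) (σ A : Matrix n n ℂ)
    (B : Matrix m m ℂ) (hA : Aᴴ = A) (hB : Bᴴ = B) :
    ∑ i, ((K i * A - B * K i) * σ * (K i * A - B * K i)ᴴ).trace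
      = (A * A * σ).trace - 2 * (krausAdj K B * jordan σ A).trace
        + (B * B * krausMap K σ).trace := by
  rw [Finset.sum_congr rfl fun i _ => dvg_term K σ A B hA hB i]
  have S1 : ∑ i, ((K i)ᴴ * K i * (A * (σ * A))).trace = (A * A * σ).trace := by
    rw [← Matrix.trace_sum, ← Finset.sum_mul, hK, one_mul]
    calc (A * (σ * A)).trace = ((A * σ) * A).trace := by rw [Matrix.mul_assoc]
      _ = (A * A * σ).trace := Matrix.trace_mul_cycle A σ A
  have S23 : ∑ i, (((K i)ᴴ * (B * (K i * (σ * A)))).trace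
        + ((K i)ᴴ * (B * (K i * (A * σ)))).trace)
      = 2 * (krausAdj K B * jordan σ A).trace := by
    simp only [krausAdj, jordan, Finset.sum_mul, Matrix.mul_smul, Matrix.mul_add,
      Matrix.trace_sum, Matrix.trace_smul, Matrix.trace_add, smul_eq_mul, Finset.mul_sum,
      Matrix.mul_assoc]
    rw [Finset.sum_add_distrib]
    ring_nf
    exact Finset.sum_add_distrib.symm
  have S4 : ∑ i, (B * (B * (K i * (σ * (K i)ᴴ)))).trace = (B * B * krausMap K σ).trace := by
    simp only [krausMap, Finset.mul_sum, Matrix.trace_sum, Matrix.mul_assoc]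
  calc ∑ i, (((K i)ᴴ * K i * (A * (σ * A))).trace
        - ((K i)ᴴ * (B * (K i * (σ * A)))).trace
        - ((K i)ᴴ * (B * (K i * (A * σ)))).trace
        + (B * (B * (K i * (σ * (K i)ᴴ)))).trace)
      = ∑ i, ((K i)ᴴ * K i * (A * (σ * A))).trace
        - ∑ i, (((K i)ᴴ * (B * (K i * (σ * A)))).trace
            + ((K i)ᴴ * (B * (K i * (A * σ)))).trace)
        + ∑ i, (B * (B * (K i * (σ * (K i)ᴴ)))).trace := by
        rw [← Finset.sum_sub_distrib, ← Finset.sum_add_distrib]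
        exact Finset.sum_congr rfl fun i _ => by ring
    _ = _ := by rw [S1, S23, S4]

lemma dvg_nonneg (K : ι → Matrix m n ℂ) (hK : TracePreserving K) {σ A : Matrix n n ℂ}
    {B : Matrix m m ℂ} (hσ : σ.PosSemidef) (hA : Aᴴ = A) (hB : Bᴴ = B) :
    0 ≤ Dvg σ K A B := by
  have hexp := dvg_expand K hK σ A B hA hB
  have hre : Dvg σ K A B
      = (∑ i, ((K i * A - B * K i) * σ * (K i * A - B * K i)ᴴ).trace).re := by
    rw [hexp]
    simp [Dvg, nsq, Complex.sub_re, Complex.add_re, Complex.mul_re]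
  rw [hre, Complex.re_sum]
  exact Finset.sum_nonneg fun i _ => trace_psd_re_nonneg (hσ.mul_mul_conjTranspose_same _)

lemma dvg_gce {σ : Matrix n n ℂ} {K : ι → Matrix m n ℂ} {A : Matrix n n ℂ}
    {B : Matrix m m ℂ} (h : SolvesGCE σ K A B) :
    Dvg σ K A B = nsq σ A - nsq (krausMap K σ) B := by
  have hcross : (krausAdj K B * jordan σ A).trace = (B * B * krausMap K σ).trace := by
    rw [trace_adj_mul, ← (h : jordan (krausMap K σ) B = _), trace_mul_jordan_self]
  rw [Dvg, hcross]
  simp only [nsq]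
  ring

lemma krausMap_smul (K : ι → Matrix m n ℂ) (c : ℂ) (X : Matrix n n ℂ) :
    krausMap K (c • X) = c • krausMap K X := by
  simp [krausMap, Matrix.smul_mul, Matrix.mul_smul, Finset.smul_sum]

lemma krausMap_sub (K : ι → Matrix m n ℂ) (X Y : Matrix n n ℂ) :
    krausMap K (X - Y) = krausMap K X - krausMap K Y := by
  simp [krausMap, Matrix.sub_mul, Matrix.mul_sub, Finset.sum_sub_distrib]

lemma krausMap_sum {κ : Type*} [Fintype κ] (K : ι → Matrix m n ℂ) (f : κ → Matrix n n ℂ) :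
    krausMap K (∑ x, f x) = ∑ x, krausMap K (f x) := by
  simp only [krausMap, Matrix.mul_sum, Matrix.sum_mul]
  rw [Finset.sum_comm]

lemma jordan_smul_left (c : ℂ) (σ A : Matrix n n ℂ) :
    jordan (c • σ) A = c • jordan σ A := by
  simp [jordan, Matrix.smul_mul, Matrix.mul_smul, smul_add, smul_smul, mul_comm]

lemma jordan_sum_left {κ : Type*} [Fintype κ] (σ : κ → Matrix n n ℂ) (A : Matrix n n ℂ) :
    jordan (∑ x, σ x) A = ∑ x, jordan (σ x) A := by
  simp [jordan, Finset.sum_mul, Finset.mul_sum, Finset.smul_sum, Finset.sum_add_distrib]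

lemma jordan_sub_smul_one (σ A : Matrix n n ℂ) (c : ℂ) :
    jordan σ (A - c • 1) = jordan σ A - c • σ := by
  simp only [jordan, Matrix.mul_sub, Matrix.sub_mul, Matrix.mul_smul, Matrix.smul_mul,
    Matrix.mul_one, Matrix.one_mul]
  module

lemma gce_shift {σ : Matrix n n ℂ} {K : ι → Matrix m n ℂ} {A : Matrix n n ℂ}
    {B : Matrix m m ℂ} (h : SolvesGCE σ K A B) (c : ℂ) :
    SolvesGCE σ K (A - c • 1) (B - c • 1) := by
  unfold SolvesGCE at *
  rw [jordan_sub_smul_one, jordan_sub_smul_one, krausMap_sub, krausMap_smul, h]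

lemma err_expand {d : Type*} [Fintype d] [DecidableEq d] (C σ : Matrix d d ℂ) (c : ℝ)
    (hσtr : σ.trace = 1) :
    ((C - (c : ℂ) • 1) * (C - (c : ℂ) • 1) * σ).trace
      = (C * C * σ).trace - ((2 * c : ℝ) : ℂ) * (C * σ).trace + (((c ^ 2 : ℝ)) : ℂ) := by
  have h : (C - (c : ℂ) • 1) * (C - (c : ℂ) • 1)
      = C * C - (((2 * c : ℝ) : ℂ)) • C + (((c ^ 2 : ℝ) : ℂ)) • 1 := by
    simp only [Matrix.sub_mul, Matrix.mul_sub, Matrix.smul_mul, Matrix.mul_smul,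
      Matrix.mul_one, Matrix.one_mul, smul_smul]
    push_cast
    module
  rw [h, Matrix.add_mul, Matrix.sub_mul, Matrix.smul_mul, Matrix.smul_mul,
    Matrix.trace_add, Matrix.trace_sub, Matrix.trace_smul, Matrix.trace_smul,
    Matrix.one_mul, hσtr, smul_eq_mul, smul_eq_mul, mul_one]

lemma gce_tr {σ : Matrix n n ℂ} {K : ι → Matrix m n ℂ} {A : Matrix n n ℂ}
    {B : Matrix m m ℂ} (h : SolvesGCE σ K A B) (hK : TracePreserving K) :
    (B * krausMap K σ).trace = (A * σ).trace := by
  have h1 := congrArg Matrix.trace (h : jordan (krausMap K σ) B = krausMap K (jordan σ A))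
  rw [trace_jordan_s19, krausMap_trace K hK, trace_jordan_s19] at h1
  rw [Matrix.trace_mul_comm, h1, Matrix.trace_mul_comm]

end Aux
/-- Rao–Blackwellizing the Personick estimator leaves the errors
unchanged. -/
theorem personick_rao_blackwell {X n m ι : Type*} [Fintype X]
    [Fintype n] [DecidableEq n] [Fintype m] [DecidableEq m] [Fintype ι]
    (P : X → ℝ) (hP : ∀ x, 0 ≤ P x) (hPsum : ∑ x, P x = 1)
    (a : X → ℝ) (ρ : X → Matrix n n ℂ) (hρ : ∀ x, IsDensity (ρ x))
    (Bstar : Matrix n n ℂ) (hBstar : Bstar.IsHermitian)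
    (hPersonick : (∑ x, (P x : ℂ) • ρ x) * Bstar + Bstar * (∑ x, (P x : ℂ) • ρ x)
      = (2 : ℂ) • ∑ x, ((P x * a x : ℝ) : ℂ) • ρ x)
    (K : ι → Matrix m n ℂ) (hK : TracePreserving K)
    (B' : Matrix m m ℂ) (hB' : B'.IsHermitian)
    (hGCE : ∀ x, SolvesGCE (ρ x) K Bstar B') :
    (krausMap K (∑ x, (P x : ℂ) • ρ x) * B' + B' * krausMap K (∑ x, (P x : ℂ) • ρ x)
        = (2 : ℂ) • ∑ x, ((P x * a x : ℝ) : ℂ) • krausMap K (ρ x)) ∧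
    (∑ x, P x *
        (Matrix.trace ((Bstar - (a x : ℂ) • 1) * (Bstar - (a x : ℂ) • 1) * ρ x)).re
      = ∑ x, P x *
        (Matrix.trace ((B' - (a x : ℂ) • 1) * (B' - (a x : ℂ) • 1)
          * krausMap K (ρ x))).re) ∧
    (∀ x, 0 < P x →
      (Matrix.trace ((Bstar - (a x : ℂ) • 1) * (Bstar - (a x : ℂ) • 1) * ρ x)).re
        = (Matrix.trace ((B' - (a x : ℂ) • 1) * (B' - (a x : ℂ) • 1)
          * krausMap K (ρ x))).re) := by
  classical
  -- abbreviations
  set ρbar : Matrix n n ℂ := ∑ x, (P x : ℂ) • ρ x with hρbar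
  -- Personick equation in Jordan form
  have hPj : jordan ρbar Bstar = ∑ x, ((P x * a x : ℝ) : ℂ) • ρ x := by
    rw [jordan, hPersonick, smul_smul]
    norm_num
  -- linearity of the channel over the prior mixture
  have hKbar : krausMap K ρbar = ∑ x, (P x : ℂ) • krausMap K (ρ x) := by
    rw [hρbar, krausMap_sum]
    exact Finset.sum_congr rfl fun x _ => krausMap_smul K _ _
  have hjbar : jordan ρbar Bstar = ∑ x, (P x : ℂ) • jordan (ρ x) Bstar := by
    rw [hρbar, jordan_sum_left]
    exact Finset.sum_congr rfl fun x _ => jordan_smul_left _ _ _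
  -- summed GCE equation
  have hGCEbar : jordan (krausMap K ρbar) B'
      = krausMap K (∑ x, ((P x * a x : ℝ) : ℂ) • ρ x) := by
    calc jordan (krausMap K ρbar) B'
        = ∑ x, (P x : ℂ) • jordan (krausMap K (ρ x)) B' := by
          rw [hKbar, jordan_sum_left]
          exact Finset.sum_congr rfl fun x _ => jordan_smul_left _ _ _
      _ = ∑ x, (P x : ℂ) • krausMap K (jordan (ρ x) Bstar) := by
          refine Finset.sum_congr rfl fun x _ => ?_
          rw [show jordan (krausMap K (ρ x)) B' = krausMap K (jordan (ρ x) Bstar)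
            from hGCE x]
      _ = krausMap K (∑ x, (P x : ℂ) • jordan (ρ x) Bstar) := by
          rw [krausMap_sum]
          exact Finset.sum_congr rfl fun x _ => (krausMap_smul K _ _).symm
      _ = krausMap K (jordan ρbar Bstar) := by rw [hjbar]
      _ = krausMap K (∑ x, ((P x * a x : ℝ) : ℂ) • ρ x) := by rw [hPj]
  -- Part (i)
  have part1 : krausMap K ρbar * B' + B' * krausMap K ρbar
      = (2 : ℂ) • ∑ x, ((P x * a x : ℝ) : ℂ) • krausMap K (ρ x) := by
    have h2j : krausMap K ρbar * B' + B' * krausMap K ρbar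
        = (2 : ℂ) • jordan (krausMap K ρbar) B' := by
      rw [jordan, smul_smul]
      norm_num
    rw [h2j, hGCEbar, krausMap_sum]
    congr 1
    exact Finset.sum_congr rfl fun x _ => krausMap_smul K _ _
  -- hermiticity of shifted estimators
  have hAH : ∀ x : X, (Bstar - (a x : ℂ) • 1)ᴴ = Bstar - (a x : ℂ) • 1 := fun x => by
    simp [Matrix.conjTranspose_sub, Matrix.conjTranspose_smul, hBstar.eq,
      Complex.star_def, Complex.conj_ofReal]
  have hBH : ∀ x : X, (B' - (a x : ℂ) • 1)ᴴ = B' - (a x : ℂ) • 1 := fun x => by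
    simp [Matrix.conjTranspose_sub, Matrix.conjTranspose_smul, hB'.eq,
      Complex.star_def, Complex.conj_ofReal]
  -- traces of the post-channel states are 1
  have htr1 : ∀ x : X, (krausMap K (ρ x)).trace = 1 := fun x => by
    rw [krausMap_trace K hK]; exact (hρ x).2
  -- per-point cross-trace identity from GCE
  have h3 : ∀ x : X, (B' * krausMap K (ρ x)).trace = (Bstar * ρ x).trace :=
    fun x => gce_tr (hGCE x) hK
  -- the per-point error gap equals the per-point variance gap
  have key : ∀ x : X,
      (Matrix.trace ((Bstar - (a x : ℂ) • 1) * (Bstar - (a x : ℂ) • 1) * ρ x)).re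
        - (Matrix.trace ((B' - (a x : ℂ) • 1) * (B' - (a x : ℂ) • 1)
            * krausMap K (ρ x))).re
      = (Matrix.trace (Bstar * Bstar * ρ x)).re
        - (Matrix.trace (B' * B' * krausMap K (ρ x))).re := fun x => by
    rw [err_expand _ _ _ (hρ x).2, err_expand _ _ _ (htr1 x), h3 x]
    simp only [Complex.add_re, Complex.sub_re, Complex.re_ofReal_mul, Complex.ofReal_re]
    ring
  -- per-point nonnegativity of the gap (via the divergence)
  have hg_nonneg : ∀ x : X,
      0 ≤ (Matrix.trace ((Bstar - (a x : ℂ) • 1) * (Bstar - (a x : ℂ) • 1) * ρ x)).re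
        - (Matrix.trace ((B' - (a x : ℂ) • 1) * (B' - (a x : ℂ) • 1)
            * krausMap K (ρ x))).re := fun x => by
    have hs := gce_shift (hGCE x) ((a x : ℂ))
    have h0 := dvg_nonneg K hK (hρ x).1 (hAH x) (hBH x)
    rw [dvg_gce hs] at h0
    simpa [nsq] using h0
  -- the Personick chain: weighted variances agree
  have hvarC : ∑ x, (P x : ℂ) * (Matrix.trace (B' * B' * krausMap K (ρ x)))
      = ∑ x, (P x : ℂ) * (Matrix.trace (Bstar * Bstar * ρ x)) := by
    have c1 : (B' * B' * krausMap K ρbar).trace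
        = ∑ x, (P x : ℂ) * (B' * B' * krausMap K (ρ x)).trace := by
      rw [hKbar, Matrix.mul_sum, Matrix.trace_sum]
      exact Finset.sum_congr rfl fun x _ => by
        rw [Matrix.mul_smul, Matrix.trace_smul, smul_eq_mul]
    have c2 : (B' * B' * krausMap K ρbar).trace
        = ∑ x, (P x : ℂ) * (Bstar * Bstar * ρ x).trace := by
      calc (B' * B' * krausMap K ρbar).trace
          = (B' * jordan (krausMap K ρbar) B').trace :=
            (trace_mul_jordan_self _ _).symm
        _ = (B' * krausMap K (∑ x, ((P x * a x : ℝ) : ℂ) • ρ x)).trace := by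
            rw [hGCEbar]
        _ = ∑ x, ((P x * a x : ℝ) : ℂ) * (B' * krausMap K (ρ x)).trace := by
            rw [krausMap_sum,
              Finset.sum_congr rfl fun x _ => krausMap_smul K ((P x * a x : ℝ) : ℂ) (ρ x),
              Matrix.mul_sum, Matrix.trace_sum]
            exact Finset.sum_congr rfl fun x _ => by
              rw [Matrix.mul_smul, Matrix.trace_smul, smul_eq_mul]
        _ = ∑ x, ((P x * a x : ℝ) : ℂ) * (Bstar * ρ x).trace :=
            Finset.sum_congr rfl fun x _ => by rw [h3 x]
        _ = (Bstar * (∑ x, ((P x * a x : ℝ) : ℂ) • ρ x)).trace := by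
            rw [Matrix.mul_sum, Matrix.trace_sum]
            exact Finset.sum_congr rfl fun x _ => by
              rw [Matrix.mul_smul, Matrix.trace_smul, smul_eq_mul]
        _ = (Bstar * jordan ρbar Bstar).trace := by rw [hPj]
        _ = (Bstar * Bstar * ρbar).trace := trace_mul_jordan_self _ _
        _ = ∑ x, (P x : ℂ) * (Bstar * Bstar * ρ x).trace := by
            rw [hρbar, Matrix.mul_sum, Matrix.trace_sum]
            exact Finset.sum_congr rfl fun x _ => by
              rw [Matrix.mul_smul, Matrix.trace_smul, smul_eq_mul]
    rw [← c1, c2]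
  -- real part of the chain
  have hvar : ∑ x, P x * (Matrix.trace (B' * B' * krausMap K (ρ x))).re
      = ∑ x, P x * (Matrix.trace (Bstar * Bstar * ρ x)).re := by
    have := congrArg Complex.re hvarC
    simpa [Complex.re_sum, Complex.re_ofReal_mul] using this
  -- weighted sum of gaps is zero
  have hg_sum : ∑ x, P x *
      ((Matrix.trace ((Bstar - (a x : ℂ) • 1) * (Bstar - (a x : ℂ) • 1) * ρ x)).re
        - (Matrix.trace ((B' - (a x : ℂ) • 1) * (B' - (a x : ℂ) • 1)
            * krausMap K (ρ x))).re) = 0 := by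
    rw [Finset.sum_congr rfl fun x _ => by rw [key x]]
    rw [Finset.sum_congr rfl fun (x : X) _ =>
      (mul_sub (P x) (Matrix.trace (Bstar * Bstar * ρ x)).re
        (Matrix.trace (B' * B' * krausMap K (ρ x))).re),
      Finset.sum_sub_distrib, hvar, sub_self]
  -- each weighted gap vanishes
  have hzero : ∀ x ∈ Finset.univ, P x *
      ((Matrix.trace ((Bstar - (a x : ℂ) • 1) * (Bstar - (a x : ℂ) • 1) * ρ x)).re
        - (Matrix.trace ((B' - (a x : ℂ) • 1) * (B' - (a x : ℂ) • 1)
            * krausMap K (ρ x))).re) = 0 := by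
    refine (Finset.sum_eq_zero_iff_of_nonneg fun x _ =>
      mul_nonneg (hP x) (hg_nonneg x)).mp hg_sum
  refine ⟨part1, ?_, ?_⟩
  · -- part (ii)
    rw [← sub_eq_zero, ← Finset.sum_sub_distrib]
    rw [Finset.sum_congr rfl fun (x : X) _ =>
      (mul_sub (P x) (Matrix.trace ((Bstar - (a x : ℂ) • 1) * (Bstar - (a x : ℂ) • 1)
          * ρ x)).re
        (Matrix.trace ((B' - (a x : ℂ) • 1) * (B' - (a x : ℂ) • 1)
          * krausMap K (ρ x))).re).symm]
    exact Finset.sum_eq_zero fun x _ => hzero x (Finset.mem_univ x)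
  · -- part (iii)
    intro x hx
    have h0 := hzero x (Finset.mem_univ x)
    rcases mul_eq_zero.mp h0 with h | h
    · exact absurd h (ne_of_gt hx)
    · linarith [sub_eq_zero.mp h]
end
end
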